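/- arXiv:2006.06832 — 5 statements merged into one kernel-verified Lean document; each statement's English description precedes it below -/
import Mathlib

section
/- Let S ⊆ [m] × [n] with G_S doubly chordal bipartite, and suppose (i₁,j₁), (i₁,j₂), (i₂,j₁), (i₂,j₂) ∈ S. Define p̂_{ij} = u_{i+} u_{+j} (∏_{C ∈ Int(ij)} C⁺) / (u_{++} ∏_{D ∈ Max(ij)} D⁺) for generic positive u. Then p̂_{i₁j₁} · p̂_{i₂j₂} = p̂_{i₁j₂} · p̂_{i₂j₁}. -/
open Finset

open scoped Classical

/-- The bipartite graph associated to `S ⊆ [m] × [n]`. -/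
def qiGraph (m n : ℕ) (S : Finset (Fin m × Fin n)) : SimpleGraph (Fin m ⊕ Fin n) :=
  SimpleGraph.fromRel (fun a b =>
    ∃ p : Fin m × Fin n, p ∈ S ∧ a = Sum.inl p.1 ∧ b = Sum.inr p.2)

/-- A chord of a closed walk: an edge of `G` between vertices of the walk that is not
an edge of the walk. -/
def IsChord {V : Type*} (G : SimpleGraph V) {v : V} (c : G.Walk v v) (e : Sym2 V) : Prop :=
  e ∈ G.edgeSet ∧ e ∉ c.edges ∧ ∀ x ∈ e, x ∈ c.support

/-- Every cycle of length at least 6 has at least one chord. -/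
def ChordalBipartite {V : Type*} (G : SimpleGraph V) : Prop :=
  ∀ (v : V) (c : G.Walk v v), c.IsCycle → 6 ≤ c.length → ∃ e : Sym2 V, IsChord G c e

/-- Every cycle of length at least 6 has at least two chords. -/
def DoublyChordalBipartite {V : Type*} (G : SimpleGraph V) : Prop :=
  ∀ (v : V) (c : G.Walk v v), c.IsCycle → 6 ≤ c.length →
    ∃ e₁ e₂ : Sym2 V, e₁ ≠ e₂ ∧ IsChord G c e₁ ∧ IsChord G c e₂

variable {m n : ℕ}

/-- A (nonempty) clique in `S`: a subset of `S` of the form `R × T`. -/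
def IsGridClique (S C : Finset (Fin m × Fin n)) : Prop :=
  C.Nonempty ∧ C ⊆ S ∧ ∀ p ∈ C, ∀ q ∈ C, (p.1, q.2) ∈ C

/-- A maximal clique in `S`. -/
def IsMaxClique (S C : Finset (Fin m × Fin n)) : Prop :=
  IsGridClique S C ∧ ∀ C', IsGridClique S C' → C ⊆ C' → C = C'

/-- `Max(S)`: the set of maximal cliques of `S`. -/
noncomputable def maxCliques (S : Finset (Fin m × Fin n)) : Finset (Finset (Fin m × Fin n)) :=
  S.powerset.filter (IsMaxClique S)

/-- `Max(x)`: maximal cliques containing the index `x`. -/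
noncomputable def maxCliquesAt (S : Finset (Fin m × Fin n)) (x : Fin m × Fin n) :
    Finset (Finset (Fin m × Fin n)) :=
  (maxCliques S).filter (fun D => x ∈ D)

/-- Pairwise intersections of distinct maximal cliques of `S`. -/
noncomputable def pairInts (S : Finset (Fin m × Fin n)) : Finset (Finset (Fin m × Fin n)) :=
  ((maxCliques S ×ˢ maxCliques S).filter (fun P => P.1 ≠ P.2)).image (fun P => P.1 ∩ P.2)

/-- `Int(S)`: containment-maximal pairwise intersections of maximal cliques of `S`. -/
noncomputable def maxInts (S : Finset (Fin m × Fin n)) : Finset (Finset (Fin m × Fin n)) :=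
  (pairInts S).filter (fun C => ∀ C' ∈ pairInts S, C ⊆ C' → C = C')

/-- Pairwise intersections of distinct elements of `Max(x)`. -/
noncomputable def pairIntsAt (S : Finset (Fin m × Fin n)) (x : Fin m × Fin n) :
    Finset (Finset (Fin m × Fin n)) :=
  ((maxCliquesAt S x ×ˢ maxCliquesAt S x).filter (fun P => P.1 ≠ P.2)).image
    (fun P => P.1 ∩ P.2)

/-- `Int(x)`: containment-maximal pairwise intersections of elements of `Max(x)`. -/
noncomputable def maxIntsAt (S : Finset (Fin m × Fin n)) (x : Fin m × Fin n) :
    Finset (Finset (Fin m × Fin n)) :=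
  (pairIntsAt S x).filter (fun C => ∀ C' ∈ pairIntsAt S x, C ⊆ C' → C = C')

/-- The rows of column `j` that are also nonzero rows of column `j₀`. -/
noncomputable def colRows (S : Finset (Fin m × Fin n)) (j₀ j : Fin n) : Finset (Fin m) :=
  Finset.univ.filter (fun i => (i, j) ∈ S ∧ (i, j₀) ∈ S)

/-- The clique induced by the block (w.r.t. column `j₀`) of the column `j`. -/
noncomputable def inducedClique (S : Finset (Fin m × Fin n)) (j₀ j : Fin n) :
    Finset (Fin m × Fin n) :=
  Finset.univ.filter (fun p => p.1 ∈ colRows S j₀ j ∧ colRows S j₀ j ⊆ colRows S j₀ p.2)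

/-- The row indices of a subset of `S`. -/
noncomputable def rowsOf (D : Finset (Fin m × Fin n)) : Finset (Fin m) := D.image Prod.fst

/-- An element of the poset `P(j₀)`: a maximal clique of `S` meeting column `j₀`. -/
def PNode (S : Finset (Fin m × Fin n)) (j₀ : Fin n) (D : Finset (Fin m × Fin n)) : Prop :=
  IsMaxClique S D ∧ ∃ i, (i, j₀) ∈ D

/-- `PCovers S j₀ Dβ Dα` means `Dα ⋖ Dβ` in the poset `P(j₀)` (ordered by
containment of row sets). -/
def PCovers (S : Finset (Fin m × Fin n)) (j₀ : Fin n) (Dβ Dα : Finset (Fin m × Fin n)) : Prop :=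
  PNode S j₀ Dα ∧ PNode S j₀ Dβ ∧ rowsOf Dα ⊂ rowsOf Dβ ∧
    ¬ ∃ Dγ, PNode S j₀ Dγ ∧ rowsOf Dα ⊂ rowsOf Dγ ∧ rowsOf Dγ ⊂ rowsOf Dβ

/-- `C⁺`: the sum of the entries of `u` indexed by `C`. -/
def cliqueSum (u : Fin m × Fin n → ℝ) (C : Finset (Fin m × Fin n)) : ℝ := ∑ x ∈ C, u x

/-- `u_{i+}`: the `i`-th row marginal of `u` over `S`. -/
noncomputable def rowMarg (S : Finset (Fin m × Fin n)) (u : Fin m × Fin n → ℝ) (i : Fin m) : ℝ :=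
  ∑ x ∈ S.filter (fun x => x.1 = i), u x

/-- `u_{+j}`: the `j`-th column marginal of `u` over `S`. -/
noncomputable def colMarg (S : Finset (Fin m × Fin n)) (u : Fin m × Fin n → ℝ) (j : Fin n) : ℝ :=
  ∑ x ∈ S.filter (fun x => x.2 = j), u x

/-- `u_{++}`: the total sum of `u` over `S`. -/
def totalSum (S : Finset (Fin m × Fin n)) (u : Fin m × Fin n → ℝ) : ℝ := ∑ x ∈ S, u x

/-- The candidate maximum likelihood estimate (clique formula). -/
noncomputable def phat (S : Finset (Fin m × Fin n)) (u : Fin m × Fin n → ℝ)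
    (x : Fin m × Fin n) : ℝ :=
  rowMarg S u x.1 * colMarg S u x.2 * (∏ C ∈ maxIntsAt S x, cliqueSum u C) /
    (totalSum S u * ∏ D ∈ maxCliquesAt S x, cliqueSum u D)

section Aux
variable {m n : ℕ}

lemma gridClique_closure {S C : Finset (Fin m × Fin n)} (h : IsGridClique S C)
    {a a' : Fin m} {b b' : Fin n} (h1 : (a, b) ∈ C) (h2 : (a', b') ∈ C) : (a, b') ∈ C :=
  h.2.2 (a, b) h1 (a', b') h2

lemma mem_gridClique_iff {S C : Finset (Fin m × Fin n)} (h : IsGridClique S C)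
    {x : Fin m} {y : Fin n} :
    (x, y) ∈ C ↔ x ∈ rowsOf C ∧ y ∈ C.image Prod.snd := by
  constructor
  · intro hm
    exact ⟨Finset.mem_image.2 ⟨_, hm, rfl⟩, Finset.mem_image.2 ⟨_, hm, rfl⟩⟩
  · rintro ⟨hx, hy⟩
    obtain ⟨p, hp, hpx⟩ := Finset.mem_image.1 hx
    obtain ⟨q, hq, hqy⟩ := Finset.mem_image.1 hy
    have := h.2.2 p hp q hq
    rwa [hpx, hqy] at this

lemma exists_maxClique {S C : Finset (Fin m × Fin n)} (h : IsGridClique S C) :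
    ∃ D, IsMaxClique S D ∧ C ⊆ D := by
  obtain ⟨D, hD, hmax⟩ := Finset.exists_max_image
    (S.powerset.filter (fun D => IsGridClique S D ∧ C ⊆ D)) Finset.card
    ⟨C, by simp [Finset.mem_filter, Finset.mem_powerset, h.2.1, h]⟩
  simp only [Finset.mem_filter, Finset.mem_powerset] at hD
  refine ⟨D, ⟨hD.2.1, ?_⟩, hD.2.2⟩
  intro C' hC' hsub
  refine Finset.eq_of_subset_of_card_le hsub ?_
  exact hmax C' (by
    simp only [Finset.mem_filter, Finset.mem_powerset]
    exact ⟨hC'.2.1, hC', hD.2.2.trans hsub⟩)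

lemma mem_maxCliques_iff {S D : Finset (Fin m × Fin n)} :
    D ∈ maxCliques S ↔ IsMaxClique S D := by
  simp only [maxCliques, Finset.mem_filter, Finset.mem_powerset, and_iff_right_iff_imp]
  exact fun h => h.1.2.1

lemma qiGraph_adj_inl_inr {S : Finset (Fin m × Fin n)} {i : Fin m} {j : Fin n} :
    (qiGraph m n S).Adj (Sum.inl i) (Sum.inr j) ↔ (i, j) ∈ S := by
  simp only [qiGraph, SimpleGraph.fromRel_adj, ne_eq]
  constructor
  · rintro ⟨-, ⟨p, hp, h1, h2⟩ | ⟨p, hp, h1, h2⟩⟩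
    · cases Sum.inl.inj h1; cases Sum.inr.inj h2; exact hp
    · exact absurd h1 (by simp)
  · intro h
    exact ⟨by simp, Or.inl ⟨(i, j), h, rfl, rfl⟩⟩

lemma qiGraph_adj_cases {S : Finset (Fin m × Fin n)} {a b : Fin m ⊕ Fin n}
    (h : (qiGraph m n S).Adj a b) :
    ∃ i j, (i, j) ∈ S ∧ ((a = Sum.inl i ∧ b = Sum.inr j) ∨ (a = Sum.inr j ∧ b = Sum.inl i)) := by
  obtain ⟨-, ⟨p, hp, h1, h2⟩ | ⟨p, hp, h1, h2⟩⟩ := h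
  · exact ⟨p.1, p.2, hp, Or.inl ⟨h1, h2⟩⟩
  · exact ⟨p.1, p.2, hp, Or.inr ⟨h2, h1⟩⟩

end Aux

section LemA
variable {m n : ℕ}

/-- **Lemma A**: in a doubly chordal bipartite `S` with a fully observed 2×2 minor,
no maximal clique contains one corner while avoiding both adjacent corners. -/
lemma not_diag_maxClique {S : Finset (Fin m × Fin n)}
    (hS : DoublyChordalBipartite (qiGraph m n S))
    {a1 a2 : Fin m} {b1 b2 : Fin n}
    (k11 : (a1, b1) ∈ S) (k12 : (a1, b2) ∈ S) (k21 : (a2, b1) ∈ S) (k22 : (a2, b2) ∈ S)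
    {D : Finset (Fin m × Fin n)} (hD : IsMaxClique S D) (hmem : (a1, b1) ∈ D) :
    (a1, b2) ∈ D ∨ (a2, b1) ∈ D := by
  by_contra hcon
  push_neg at hcon
  obtain ⟨h12D, h21D⟩ := hcon
  have hgrid := hD.1
  have ha1 : a1 ∈ rowsOf D := (mem_gridClique_iff hgrid).1 hmem |>.1
  have hb1 : b1 ∈ D.image Prod.snd := (mem_gridClique_iff hgrid).1 hmem |>.2
  have ha2 : a2 ∉ rowsOf D := fun h => h21D ((mem_gridClique_iff hgrid).2 ⟨h, hb1⟩)
  have hb2 : b2 ∉ D.image Prod.snd := fun h => h12D ((mem_gridClique_iff hgrid).2 ⟨ha1, h⟩)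
  -- find a row i3 of D with (i3, b2) ∉ S
  have hi3 : ∃ i3 ∈ rowsOf D, (i3, b2) ∉ S := by
    by_contra hc
    push_neg at hc
    have hD' : IsGridClique S (rowsOf D ×ˢ (D.image Prod.snd ∪ {b2})) := by
      refine ⟨⟨(a1, b2), Finset.mem_product.2 ⟨ha1, by simp⟩⟩, ?_, ?_⟩
      · rintro ⟨x, y⟩ hxy
        obtain ⟨hx, hy⟩ := Finset.mem_product.1 hxy
        rcases Finset.mem_union.1 hy with hy | hy
        · exact hgrid.2.1 ((mem_gridClique_iff hgrid).2 ⟨hx, hy⟩)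
        · rw [Finset.mem_singleton] at hy; subst hy; exact hc x hx
      · rintro ⟨x, y⟩ hxy ⟨x', y'⟩ hxy'
        exact Finset.mem_product.2 ⟨(Finset.mem_product.1 hxy).1, (Finset.mem_product.1 hxy').2⟩
    have hsub : D ⊆ rowsOf D ×ˢ (D.image Prod.snd ∪ {b2}) := by
      rintro ⟨x, y⟩ hxy
      exact Finset.mem_product.2 ⟨Finset.mem_image.2 ⟨_, hxy, rfl⟩,
        Finset.mem_union.2 (Or.inl (Finset.mem_image.2 ⟨_, hxy, rfl⟩))⟩
    have := hD.2 _ hD' hsub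
    apply h12D
    rw [this]
    exact Finset.mem_product.2 ⟨ha1, by simp⟩
  -- find a column b3 of D with (a2, b3) ∉ S
  have hj3 : ∃ b3 ∈ D.image Prod.snd, (a2, b3) ∉ S := by
    by_contra hc
    push_neg at hc
    have hD' : IsGridClique S ((rowsOf D ∪ {a2}) ×ˢ D.image Prod.snd) := by
      refine ⟨⟨(a1, b1), Finset.mem_product.2 ⟨by simp [ha1], hb1⟩⟩, ?_, ?_⟩
      · rintro ⟨x, y⟩ hxy
        obtain ⟨hx, hy⟩ := Finset.mem_product.1 hxy
        rcases Finset.mem_union.1 hx with hx | hx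
        · exact hgrid.2.1 ((mem_gridClique_iff hgrid).2 ⟨hx, hy⟩)
        · rw [Finset.mem_singleton] at hx; subst hx; exact hc y hy
      · rintro ⟨x, y⟩ hxy ⟨x', y'⟩ hxy'
        exact Finset.mem_product.2 ⟨(Finset.mem_product.1 hxy).1, (Finset.mem_product.1 hxy').2⟩
    have hsub : D ⊆ (rowsOf D ∪ {a2}) ×ˢ D.image Prod.snd := by
      rintro ⟨x, y⟩ hxy
      exact Finset.mem_product.2 ⟨Finset.mem_union.2 (Or.inl (Finset.mem_image.2 ⟨_, hxy, rfl⟩)),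
        Finset.mem_image.2 ⟨_, hxy, rfl⟩⟩
    have := hD.2 _ hD' hsub
    apply h21D
    rw [this]
    exact Finset.mem_product.2 ⟨by simp, hb1⟩
  obtain ⟨i3, hi3D, hi3n⟩ := hi3
  obtain ⟨b3, hb3D, hb3n⟩ := hj3
  -- memberships
  have m31 : (i3, b1) ∈ D := (mem_gridClique_iff hgrid).2 ⟨hi3D, hb1⟩
  have m13 : (a1, b3) ∈ D := (mem_gridClique_iff hgrid).2 ⟨ha1, hb3D⟩
  have m33 : (i3, b3) ∈ D := (mem_gridClique_iff hgrid).2 ⟨hi3D, hb3D⟩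
  have s31 : (i3, b1) ∈ S := hgrid.2.1 m31
  have s13 : (a1, b3) ∈ S := hgrid.2.1 m13
  have s33 : (i3, b3) ∈ S := hgrid.2.1 m33
  -- distinctness
  have d12 : a1 ≠ a2 := fun h => ha2 (h ▸ ha1)
  have d13 : a1 ≠ i3 := fun h => hi3n (h ▸ k12)
  have d23 : a2 ≠ i3 := fun h => hi3n (h ▸ k22)
  have e12 : b1 ≠ b2 := fun h => hb2 (h ▸ hb1)
  have e13 : b1 ≠ b3 := fun h => hb3n (h ▸ k21)
  have e23 : b2 ≠ b3 := fun h => hb2 (h ▸ hb3D)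
  -- build the 6-cycle a1 - b2 - a2 - b1 - i3 - b3 - a1
  set G := qiGraph m n S with hG
  have A1 : G.Adj (Sum.inl a1) (Sum.inr b2) := qiGraph_adj_inl_inr.2 k12
  have A2 : G.Adj (Sum.inr b2) (Sum.inl a2) := (qiGraph_adj_inl_inr.2 k22).symm
  have A3 : G.Adj (Sum.inl a2) (Sum.inr b1) := qiGraph_adj_inl_inr.2 k21
  have A4 : G.Adj (Sum.inr b1) (Sum.inl i3) := (qiGraph_adj_inl_inr.2 s31).symm
  have A5 : G.Adj (Sum.inl i3) (Sum.inr b3) := qiGraph_adj_inl_inr.2 s33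
  have A6 : G.Adj (Sum.inr b3) (Sum.inl a1) := (qiGraph_adj_inl_inr.2 s13).symm
  set c : G.Walk (Sum.inl a1) (Sum.inl a1) :=
    .cons A1 (.cons A2 (.cons A3 (.cons A4 (.cons A5 (.cons A6 .nil))))) with hc
  have hcyc : c.IsCycle := by
    rw [SimpleGraph.Walk.isCycle_def]
    refine ⟨?_, by simp [hc], ?_⟩
    · rw [SimpleGraph.Walk.isTrail_def]
      simp [hc, Sym2.eq_iff, d12, d13, d23, e12, e13, e23,
        d12.symm, d13.symm, d23.symm, e12.symm, e13.symm, e23.symm]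
    · simp [hc, d12, d13, d23, e12, e13, e23,
        d12.symm, d13.symm, d23.symm, e12.symm, e13.symm, e23.symm]
  have key : ∀ e, IsChord G c e → e = s(Sum.inl a1, Sum.inr b1) := by
    intro e he
    induction e using Sym2.ind with
    | _ x y =>
      obtain ⟨heE, heNot, heSup⟩ := he
      rw [SimpleGraph.mem_edgeSet] at heE
      obtain ⟨i, j, hij, hcase⟩ := qiGraph_adj_cases heE
      have hsupi : Sum.inl i ∈ c.support := by
        rcases hcase with ⟨h1, h2⟩ | ⟨h1, h2⟩
        · exact heSup _ (h1 ▸ Sym2.mem_mk_left x y)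
        · exact heSup _ (h2 ▸ Sym2.mem_mk_right x y)
      have hsupj : Sum.inr j ∈ c.support := by
        rcases hcase with ⟨h1, h2⟩ | ⟨h1, h2⟩
        · exact heSup _ (h2 ▸ Sym2.mem_mk_right x y)
        · exact heSup _ (h1 ▸ Sym2.mem_mk_left x y)
      simp [hc] at hsupi hsupj
      have hnotmem : s(Sum.inl i, Sum.inr j) ∉ c.edges := by
        rcases hcase with ⟨h1, h2⟩ | ⟨h1, h2⟩
        · rw [h1, h2] at heNot; exact heNot
        · rw [h1, h2] at heNot; rwa [Sym2.eq_swap] at heNot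
      have hgoal : s(Sum.inl i, Sum.inr j) = s(Sum.inl a1, Sum.inr b1) → s(x, y) = s(Sum.inl a1, Sum.inr b1) := by
        intro h
        rcases hcase with ⟨h1, h2⟩ | ⟨h1, h2⟩
        · rw [h1, h2]; exact h
        · rw [h1, h2, Sym2.eq_swap]; exact h
      apply hgoal
      simp only [hc, SimpleGraph.Walk.edges_cons, SimpleGraph.Walk.edges_nil,
        List.mem_cons, List.not_mem_nil, or_false, Sym2.eq_iff, Sum.inl.injEq, Sum.inr.injEq,
        reduceCtorEq, and_false, false_and, or_false, false_or, not_or] at hnotmem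
      rcases hsupi with rfl | rfl | rfl | rfl <;> rcases hsupj with rfl | rfl | rfl <;>
        simp_all [Sym2.eq_iff]
  obtain ⟨e₁, e₂, hne, hc1, hc2⟩ := hS (Sum.inl a1) c hcyc (by simp [hc])
  exact hne ((key e₁ hc1).trans (key e₂ hc2).symm)

end LemA

section Ints
variable {m n : ℕ}

lemma mem_pairIntsAt_iff {S C : Finset (Fin m × Fin n)} {x : Fin m × Fin n} :
    C ∈ pairIntsAt S x ↔ ∃ D D', IsMaxClique S D ∧ IsMaxClique S D' ∧ x ∈ D ∧ x ∈ D' ∧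
      D ≠ D' ∧ C = D ∩ D' := by
  simp only [pairIntsAt, Finset.mem_image, Finset.mem_filter, Finset.mem_product,
    maxCliquesAt, mem_maxCliques_iff]
  constructor
  · rintro ⟨⟨D, D'⟩, ⟨⟨⟨hD, hxD⟩, hD', hxD'⟩, hne⟩, rfl⟩
    exact ⟨D, D', hD, hD', hxD, hxD', hne, rfl⟩
  · rintro ⟨D, D', hD, hD', hxD, hxD', hne, rfl⟩
    exact ⟨(D, D'), ⟨⟨⟨hD, hxD⟩, hD', hxD'⟩, hne⟩, rfl⟩

lemma mem_of_mem_pairIntsAt {S C : Finset (Fin m × Fin n)} {x : Fin m × Fin n}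
    (h : C ∈ pairIntsAt S x) : x ∈ C := by
  obtain ⟨D, D', _, _, hxD, hxD', _, rfl⟩ := mem_pairIntsAt_iff.1 h
  exact Finset.mem_inter.2 ⟨hxD, hxD'⟩

lemma pairIntsAt_transfer {S C : Finset (Fin m × Fin n)} {x y : Fin m × Fin n}
    (h : C ∈ pairIntsAt S x) (hy : y ∈ C) : C ∈ pairIntsAt S y := by
  obtain ⟨D, D', hD, hD', hxD, hxD', hne, rfl⟩ := mem_pairIntsAt_iff.1 h
  exact mem_pairIntsAt_iff.2 ⟨D, D', hD, hD', (Finset.mem_inter.1 hy).1,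
    (Finset.mem_inter.1 hy).2, hne, rfl⟩

lemma mem_maxIntsAt_iff {S C : Finset (Fin m × Fin n)} {x : Fin m × Fin n} :
    C ∈ maxIntsAt S x ↔ C ∈ pairIntsAt S x ∧ ∀ C' ∈ pairIntsAt S x, C ⊆ C' → C = C' := by
  simp [maxIntsAt, Finset.mem_filter]

lemma maxIntsAt_transfer {S C : Finset (Fin m × Fin n)} {x y : Fin m × Fin n}
    (h : C ∈ maxIntsAt S x) (hy : y ∈ C) : C ∈ maxIntsAt S y := by
  obtain ⟨hp, hmax⟩ := mem_maxIntsAt_iff.1 h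
  refine mem_maxIntsAt_iff.2 ⟨pairIntsAt_transfer hp hy, fun C' hC' hsub => ?_⟩
  exact hmax C' (pairIntsAt_transfer hC' (hsub (mem_of_mem_pairIntsAt hp))) hsub

lemma gridClique_of_pairIntsAt {S C : Finset (Fin m × Fin n)} {x : Fin m × Fin n}
    (h : C ∈ pairIntsAt S x) : IsGridClique S C := by
  obtain ⟨D, D', hD, hD', hxD, hxD', hne, rfl⟩ := mem_pairIntsAt_iff.1 h
  refine ⟨⟨x, Finset.mem_inter.2 ⟨hxD, hxD'⟩⟩,
    fun p hp => hD.1.2.1 (Finset.mem_inter.1 hp).1, ?_⟩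
  intro p hp q hq
  rw [Finset.mem_inter] at hp hq ⊢
  exact ⟨hD.1.2.2 p hp.1 q hq.1, hD'.1.2.2 p hp.2 q hq.2⟩

/-- **Lemma B**: analogue of Lemma A for maximal intersections. -/
lemma not_diag_maxInt {S : Finset (Fin m × Fin n)}
    (hS : DoublyChordalBipartite (qiGraph m n S))
    {a1 a2 : Fin m} {b1 b2 : Fin n}
    (k11 : (a1, b1) ∈ S) (k12 : (a1, b2) ∈ S) (k21 : (a2, b1) ∈ S) (k22 : (a2, b2) ∈ S)
    {C : Finset (Fin m × Fin n)} (hC : C ∈ maxIntsAt S (a1, b1)) :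
    (a1, b2) ∈ C ∨ (a2, b1) ∈ C := by
  by_contra hcon
  push_neg at hcon
  obtain ⟨n12, n21⟩ := hcon
  obtain ⟨hp, hmax⟩ := mem_maxIntsAt_iff.1 hC
  have hxC : (a1, b1) ∈ C := mem_of_mem_pairIntsAt hp
  have hgridC := gridClique_of_pairIntsAt hp
  obtain ⟨D1, D2, hD1, hD2, hm1, hm2, hne, hCeq⟩ := mem_pairIntsAt_iff.1 hp
  -- each Dk contains (a1,b2) or (a2,b1); they cannot agree, else C would contain it
  have halt1 := not_diag_maxClique hS k11 k12 k21 k22 hD1 hm1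
  have halt2 := not_diag_maxClique hS k11 k12 k21 k22 hD2 hm2
  -- get D with (a2,b1) ∈ D, D' with (a1,b2) ∈ D', C = D ∩ D'
  obtain ⟨D, D', hDmc, hD'mc, hm, hm', hd21, hd12, hCeq'⟩ :
      ∃ D D', IsMaxClique S D ∧ IsMaxClique S D' ∧ (a1, b1) ∈ D ∧ (a1, b1) ∈ D' ∧
        (a2, b1) ∈ D ∧ (a1, b2) ∈ D' ∧ C = D ∩ D' := by
    rcases halt1 with h1 | h1
    · rcases halt2 with h2 | h2
      · exact absurd (hCeq ▸ Finset.mem_inter.2 ⟨h1, h2⟩) n12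
      · exact ⟨D2, D1, hD2, hD1, hm2, hm1, h2, h1, hCeq.trans (Finset.inter_comm _ _)⟩
    · rcases halt2 with h2 | h2
      · exact ⟨D1, D2, hD1, hD2, hm1, hm2, h1, h2, hCeq⟩
      · exact absurd (hCeq ▸ Finset.mem_inter.2 ⟨h1, h2⟩) n21
  -- the enlarged grid Q = (rows C ∪ {a2}) × (cols C ∪ {b2}) is a clique
  have hCsub : C ⊆ D := by rw [hCeq']; exact Finset.inter_subset_left
  have hCsub' : C ⊆ D' := by rw [hCeq']; exact Finset.inter_subset_right
  have hQ : IsGridClique S ((rowsOf C ∪ {a2}) ×ˢ (C.image Prod.snd ∪ {b2})) := by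
    refine ⟨⟨(a1, b1), Finset.mem_product.2 ⟨Finset.mem_union.2 (Or.inl
      (Finset.mem_image.2 ⟨_, hxC, rfl⟩)), Finset.mem_union.2 (Or.inl
      (Finset.mem_image.2 ⟨_, hxC, rfl⟩))⟩⟩, ?_, ?_⟩
    · rintro ⟨x, y⟩ hxy
      obtain ⟨hx, hy⟩ := Finset.mem_product.1 hxy
      simp only [] at hx hy
      rcases Finset.mem_union.1 hx with hx | hx <;> rcases Finset.mem_union.1 hy with hy | hy
      · exact hgridC.2.1 ((mem_gridClique_iff hgridC).2 ⟨hx, hy⟩)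
      · -- x ∈ rows C, y = b2 : use D'
        rw [Finset.mem_singleton] at hy
        obtain ⟨p, hp, hpx⟩ := Finset.mem_image.1 hx
        rw [hy]
        have : (p.1, b2) ∈ D' := hD'mc.1.2.2 p (hCsub' hp) (a1, b2) hd12
        rw [hpx] at this
        exact hD'mc.1.2.1 this
      · -- x = a2, y ∈ cols C : use D
        rw [Finset.mem_singleton] at hx
        obtain ⟨p, hp, hpy⟩ := Finset.mem_image.1 hy
        rw [hx]
        have : (a2, p.2) ∈ D := hDmc.1.2.2 (a2, b1) hd21 p (hCsub hp)
        rw [hpy] at this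
        exact hDmc.1.2.1 this
      · rw [Finset.mem_singleton] at hx hy; rw [hx, hy]; exact k22
    · rintro ⟨x, y⟩ hxy ⟨x', y'⟩ hxy'
      exact Finset.mem_product.2 ⟨(Finset.mem_product.1 hxy).1, (Finset.mem_product.1 hxy').2⟩
  obtain ⟨D5, hD5, hQsub⟩ := exists_maxClique hQ
  have hCQ : C ⊆ (rowsOf C ∪ {a2}) ×ˢ (C.image Prod.snd ∪ {b2}) := by
    rintro ⟨x, y⟩ hxy
    exact Finset.mem_product.2 ⟨Finset.mem_union.2 (Or.inl (Finset.mem_image.2 ⟨_, hxy, rfl⟩)),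
      Finset.mem_union.2 (Or.inl (Finset.mem_image.2 ⟨_, hxy, rfl⟩))⟩
  have h12D5 : (a1, b2) ∈ D5 := hQsub (Finset.mem_product.2 ⟨Finset.mem_union.2 (Or.inl
      (Finset.mem_image.2 ⟨_, hxC, rfl⟩)), Finset.mem_union.2 (Or.inr (by simp))⟩)
  have h21D5 : (a2, b1) ∈ D5 := hQsub (Finset.mem_product.2 ⟨Finset.mem_union.2 (Or.inr (by simp)),
      Finset.mem_union.2 (Or.inl (Finset.mem_image.2 ⟨_, hxC, rfl⟩))⟩)
  have h11D5 : (a1, b1) ∈ D5 := hQsub (hCQ hxC)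
  have hD5ne : D ≠ D5 := by
    rintro rfl
    -- then (a1,b2) ∈ D and ∈ D', so ∈ C
    exact n12 (hCeq' ▸ Finset.mem_inter.2 ⟨h12D5, hd12⟩)
  have hCD5 : C ∈ pairIntsAt S (a1, b1) → C ⊆ D ∩ D5 → C = D ∩ D5 :=
    fun _ h => hmax _ (mem_pairIntsAt_iff.2 ⟨D, D5, hDmc, hD5, hm, h11D5, hD5ne, rfl⟩) h
  have : C = D ∩ D5 := hCD5 hp (Finset.subset_inter hCsub (hCQ.trans hQsub))
  exact n21 (this ▸ Finset.mem_inter.2 ⟨hd21, h21D5⟩)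

end Ints

/-- The boolean counting identity for a 2×2 minor. -/
lemma quad_ite_identity {P11 P22 P12 P21 : Prop}
    [Decidable P11] [Decidable P22] [Decidable P12] [Decidable P21]
    (c1 : P11 → P12 ∨ P21) (c2 : P22 → P21 ∨ P12)
    (c3 : P12 → P11 ∨ P22) (c4 : P21 → P22 ∨ P11)
    (g1 : P11 → P22 → P12) (g2 : P11 → P22 → P21)
    (g3 : P12 → P21 → P11) (g4 : P12 → P21 → P22) (r : ℝ) :
    (if P11 then r else 1) * (if P22 then r else 1) =
      (if P12 then r else 1) * (if P21 then r else 1) := by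
  by_cases p11 : P11 <;> by_cases p22 : P22 <;> by_cases p12 : P12 <;> by_cases p21 : P21 <;>
    simp_all


/-- the clique formula satisfies the quadratic model equations
`p̂_{i₁j₁} p̂_{i₂j₂} = p̂_{i₁j₂} p̂_{i₂j₁}` for every fully observed 2×2 minor. -/
theorem phat_satisfies_quadrics (m n : ℕ) (S : Finset (Fin m × Fin n))
    (hS : DoublyChordalBipartite (qiGraph m n S)) (u : Fin m × Fin n → ℝ)
    (hu : ∀ x ∈ S, 0 < u x) (i₁ i₂ : Fin m) (j₁ j₂ : Fin n)
    (h11 : (i₁, j₁) ∈ S) (h12 : (i₁, j₂) ∈ S) (h21 : (i₂, j₁) ∈ S) (h22 : (i₂, j₂) ∈ S) :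
    phat S u (i₁, j₁) * phat S u (i₂, j₂) = phat S u (i₁, j₂) * phat S u (i₂, j₁) := by
  classical
  -- Product identity for maximal cliques
  have hMax : (∏ D ∈ maxCliquesAt S (i₁, j₁), cliqueSum u D) *
        ∏ D ∈ maxCliquesAt S (i₂, j₂), cliqueSum u D =
      (∏ D ∈ maxCliquesAt S (i₁, j₂), cliqueSum u D) *
        ∏ D ∈ maxCliquesAt S (i₂, j₁), cliqueSum u D := by
    simp only [maxCliquesAt, Finset.prod_filter, ← Finset.prod_mul_distrib]
    refine Finset.prod_congr rfl fun D hD => ?_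
    have hDm : IsMaxClique S D := mem_maxCliques_iff.1 hD
    have c1 : (i₁, j₁) ∈ D → (i₁, j₂) ∈ D ∨ (i₂, j₁) ∈ D :=
      fun h => not_diag_maxClique hS h11 h12 h21 h22 hDm h
    have c2 : (i₂, j₂) ∈ D → (i₂, j₁) ∈ D ∨ (i₁, j₂) ∈ D :=
      fun h => not_diag_maxClique hS h22 h21 h12 h11 hDm h
    have c3 : (i₁, j₂) ∈ D → (i₁, j₁) ∈ D ∨ (i₂, j₂) ∈ D :=
      fun h => not_diag_maxClique hS h12 h11 h22 h21 hDm h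
    have c4 : (i₂, j₁) ∈ D → (i₂, j₂) ∈ D ∨ (i₁, j₁) ∈ D :=
      fun h => not_diag_maxClique hS h21 h22 h11 h12 hDm h
    have g1 : (i₁, j₁) ∈ D → (i₂, j₂) ∈ D → (i₁, j₂) ∈ D :=
      fun h h' => gridClique_closure hDm.1 h h'
    have g2 : (i₁, j₁) ∈ D → (i₂, j₂) ∈ D → (i₂, j₁) ∈ D :=
      fun h h' => gridClique_closure hDm.1 h' h
    have g3 : (i₁, j₂) ∈ D → (i₂, j₁) ∈ D → (i₁, j₁) ∈ D :=
      fun h h' => gridClique_closure hDm.1 h h'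
    have g4 : (i₁, j₂) ∈ D → (i₂, j₁) ∈ D → (i₂, j₂) ∈ D :=
      fun h h' => gridClique_closure hDm.1 h' h
    exact quad_ite_identity c1 c2 c3 c4 g1 g2 g3 g4 _
  -- Product identity for maximal intersections
  set A : Finset (Finset (Fin m × Fin n)) :=
    maxIntsAt S (i₁, j₁) ∪ maxIntsAt S (i₂, j₂) ∪ (maxIntsAt S (i₁, j₂) ∪ maxIntsAt S (i₂, j₁))
    with hA
  have hkey : ∀ x : Fin m × Fin n,
      (x = (i₁, j₁) ∨ x = (i₂, j₂) ∨ x = (i₁, j₂) ∨ x = (i₂, j₁)) →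
      maxIntsAt S x = A.filter (fun C => x ∈ C) := by
    intro x hx
    ext C
    simp only [Finset.mem_filter, hA, Finset.mem_union]
    constructor
    · intro hC
      refine ⟨?_, mem_of_mem_pairIntsAt (mem_maxIntsAt_iff.1 hC).1⟩
      rcases hx with rfl | rfl | rfl | rfl
      · exact Or.inl (Or.inl hC)
      · exact Or.inl (Or.inr hC)
      · exact Or.inr (Or.inl hC)
      · exact Or.inr (Or.inr hC)
    · rintro ⟨(hC | hC) | (hC | hC), hxC⟩ <;> exact maxIntsAt_transfer hC hxC
  have hInt : (∏ C ∈ maxIntsAt S (i₁, j₁), cliqueSum u C) *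
        ∏ C ∈ maxIntsAt S (i₂, j₂), cliqueSum u C =
      (∏ C ∈ maxIntsAt S (i₁, j₂), cliqueSum u C) *
        ∏ C ∈ maxIntsAt S (i₂, j₁), cliqueSum u C := by
    rw [hkey _ (Or.inl rfl), hkey _ (Or.inr (Or.inl rfl)), hkey _ (Or.inr (Or.inr (Or.inl rfl))),
      hkey _ (Or.inr (Or.inr (Or.inr rfl)))]
    simp only [Finset.prod_filter, ← Finset.prod_mul_distrib]
    refine Finset.prod_congr rfl fun C hC => ?_
    have hCy : ∃ y, C ∈ maxIntsAt S y := by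
      rw [hA] at hC
      rcases Finset.mem_union.1 hC with hC | hC
      · rcases Finset.mem_union.1 hC with hC | hC
        · exact ⟨_, hC⟩
        · exact ⟨_, hC⟩
      · rcases Finset.mem_union.1 hC with hC | hC
        · exact ⟨_, hC⟩
        · exact ⟨_, hC⟩
    obtain ⟨y, hCy⟩ := hCy
    have hgridC : IsGridClique S C := gridClique_of_pairIntsAt (mem_maxIntsAt_iff.1 hCy).1
    have c1 : (i₁, j₁) ∈ C → (i₁, j₂) ∈ C ∨ (i₂, j₁) ∈ C :=
      fun h => not_diag_maxInt hS h11 h12 h21 h22 (maxIntsAt_transfer hCy h)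
    have c2 : (i₂, j₂) ∈ C → (i₂, j₁) ∈ C ∨ (i₁, j₂) ∈ C :=
      fun h => not_diag_maxInt hS h22 h21 h12 h11 (maxIntsAt_transfer hCy h)
    have c3 : (i₁, j₂) ∈ C → (i₁, j₁) ∈ C ∨ (i₂, j₂) ∈ C :=
      fun h => not_diag_maxInt hS h12 h11 h22 h21 (maxIntsAt_transfer hCy h)
    have c4 : (i₂, j₁) ∈ C → (i₂, j₂) ∈ C ∨ (i₁, j₁) ∈ C :=
      fun h => not_diag_maxInt hS h21 h22 h11 h12 (maxIntsAt_transfer hCy h)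
    have g1 : (i₁, j₁) ∈ C → (i₂, j₂) ∈ C → (i₁, j₂) ∈ C :=
      fun h h' => gridClique_closure hgridC h h'
    have g2 : (i₁, j₁) ∈ C → (i₂, j₂) ∈ C → (i₂, j₁) ∈ C :=
      fun h h' => gridClique_closure hgridC h' h
    have g3 : (i₁, j₂) ∈ C → (i₂, j₁) ∈ C → (i₁, j₁) ∈ C :=
      fun h h' => gridClique_closure hgridC h h'
    have g4 : (i₁, j₂) ∈ C → (i₂, j₁) ∈ C → (i₂, j₂) ∈ C :=
      fun h h' => gridClique_closure hgridC h' h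
    exact quad_ite_identity c1 c2 c3 c4 g1 g2 g3 g4 _
  -- Assemble
  simp only [phat]
  rw [div_mul_div_comm, div_mul_div_comm]
  congr 1
  · linear_combination (rowMarg S u (i₁, j₁).1 * colMarg S u (i₁, j₁).2 *
      rowMarg S u (i₂, j₂).1 * colMarg S u (i₂, j₂).2) * hInt
  · linear_combination (totalSum S u * totalSum S u) * hMax
end

section
/- Let S ⊆ [m] × [n] with G_S doubly chordal bipartite, and suppose (i₁,j₁), (i₁,j₂), (i₂,j₁), (i₂,j₂) ∈ S. Then Max(i₁j₁) ∪ Max(i₂j₂) = Max(i₁j₂) ∪ Max(i₂j₁) as multisets (equivalently, a maximal clique contains both (i₁,j₁) and (i₂,j₂) iff it contains both (i₁,j₂) and (i₂,j₁), and it contains exactly one of (i₁,j₁),(i₂,j₂) iff it contains exactly one of (i₁,j₂),(i₂,j₁)). -/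
open Finset

open scoped Classical

variable {m n : ℕ}

section Aux
variable {m n : ℕ}

lemma qiGraph_adj_iff {S : Finset (Fin m × Fin n)} {x y : Fin m ⊕ Fin n} :
    (qiGraph m n S).Adj x y ↔
      ∃ a b, (a, b) ∈ S ∧ ((x = Sum.inl a ∧ y = Sum.inr b) ∨ (x = Sum.inr b ∧ y = Sum.inl a)) := by
  rw [qiGraph, SimpleGraph.fromRel_adj]
  constructor
  · rintro ⟨hne, ⟨⟨a, b⟩, hab, hx, hy⟩ | ⟨⟨a, b⟩, hab, hy, hx⟩⟩
    · exact ⟨a, b, hab, Or.inl ⟨hx, hy⟩⟩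
    · exact ⟨a, b, hab, Or.inr ⟨hx, hy⟩⟩
  · rintro ⟨a, b, hab, ⟨hx, hy⟩ | ⟨hx, hy⟩⟩
    · exact ⟨by simp [hx, hy], Or.inl ⟨(a, b), hab, hx, hy⟩⟩
    · exact ⟨by simp [hx, hy], Or.inr ⟨(a, b), hab, hy, hx⟩⟩

lemma qiGraph_adj_lr {S : Finset (Fin m × Fin n)} {a : Fin m} {b : Fin n} :
    (qiGraph m n S).Adj (Sum.inl a) (Sum.inr b) ↔ (a, b) ∈ S := by
  rw [qiGraph_adj_iff]
  constructor
  · rintro ⟨a', b', hab, ⟨hx, hy⟩ | ⟨hx, hy⟩⟩ <;> simp_all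
  · intro h; exact ⟨a, b, h, Or.inl ⟨rfl, rfl⟩⟩

/-- The graph-theoretic core: there is no "almost-rectangle" configuration. -/
lemma no_hexagon {S : Finset (Fin m × Fin n)}
    (hS : DoublyChordalBipartite (qiGraph m n S))
    {i i₁ i₂ : Fin m} {j j₁ j₂ : Fin n}
    (hii₁ : i ≠ i₁) (hii₂ : i ≠ i₂) (hi₁i₂ : i₁ ≠ i₂)
    (hjj₁ : j ≠ j₁) (hjj₂ : j ≠ j₂) (hj₁j₂ : j₁ ≠ j₂)
    (hij : (i, j) ∈ S) (hij₁ : (i, j₁) ∈ S) (hi₁j : (i₁, j) ∈ S)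
    (h12 : (i₁, j₂) ∈ S) (h21 : (i₂, j₁) ∈ S) (h22 : (i₂, j₂) ∈ S)
    (hbad1 : (i, j₂) ∉ S) (hbad2 : (i₂, j) ∉ S) : False := by
  set G := qiGraph m n S with hG
  -- cycle: inl i - inr j - inl i₁ - inr j₂ - inl i₂ - inr j₁ - inl i
  have e1 : G.Adj (Sum.inl i) (Sum.inr j) := qiGraph_adj_lr.2 hij
  have e2 : G.Adj (Sum.inr j) (Sum.inl i₁) := (qiGraph_adj_lr.2 hi₁j).symm
  have e3 : G.Adj (Sum.inl i₁) (Sum.inr j₂) := qiGraph_adj_lr.2 h12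
  have e4 : G.Adj (Sum.inr j₂) (Sum.inl i₂) := (qiGraph_adj_lr.2 h22).symm
  have e5 : G.Adj (Sum.inl i₂) (Sum.inr j₁) := qiGraph_adj_lr.2 h21
  have e6 : G.Adj (Sum.inr j₁) (Sum.inl i) := (qiGraph_adj_lr.2 hij₁).symm
  let c : G.Walk (Sum.inl i) (Sum.inl i) :=
    .cons e1 (.cons e2 (.cons e3 (.cons e4 (.cons e5 (.cons e6 .nil)))))
  have hcyc : c.IsCycle := by
    rw [SimpleGraph.Walk.isCycle_def]
    refine ⟨?_, by simp [c], ?_⟩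
    · rw [SimpleGraph.Walk.isTrail_def]
      simp [c, Sym2.eq, Sym2.rel_iff', hii₁.symm, hii₂.symm, hi₁i₂, hjj₁, hjj₂, hj₁j₂,
        hii₁, hii₂, hjj₁.symm, hjj₂.symm, hi₁i₂.symm, hj₁j₂.symm]
    · simp [c, hii₁, hii₂, hi₁i₂, hjj₁, hjj₂, hj₁j₂, hii₁.symm, hii₂.symm, hi₁i₂.symm,
        hjj₁.symm, hjj₂.symm, hj₁j₂.symm]
  obtain ⟨f₁, f₂, hne, hc₁, hc₂⟩ := hS _ c hcyc (by simp [c])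
  -- every chord equals s(inl i₁, inr j₁)
  have key : ∀ f, IsChord G c f → f = s(Sum.inl i₁, Sum.inr j₁) := by
    rintro f ⟨hfE, hfNe, hfSup⟩
    induction f with
    | h x y =>
      have hadj : G.Adj x y := hfE
      rw [qiGraph_adj_iff] at hadj
      obtain ⟨a, b, hab, hxy⟩ := hadj
      have hx : x ∈ c.support := hfSup x (by simp)
      have hy : y ∈ c.support := hfSup y (by simp)
      have hsup : c.support = [Sum.inl i, Sum.inr j, Sum.inl i₁, Sum.inr j₂,
          Sum.inl i₂, Sum.inr j₁, Sum.inl i] := by simp [c]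
      have main : ∀ a b, (a, b) ∈ S → Sum.inl a ∈ c.support → Sum.inr b ∈ c.support →
          s(Sum.inl a, Sum.inr b) ∉ c.edges →
          s(Sum.inl a, Sum.inr b) = s(Sum.inl i₁, Sum.inr j₁) := by
        clear hx hy hab hfNe hfE hfSup
        intro a b hab hx hy hfNe
        rw [hsup] at hx hy
        simp only [List.mem_cons, List.mem_singleton] at hx hy
        have ha : a = i ∨ a = i₁ ∨ a = i₂ := by
          rcases hx with h|h|h|h|h|h|h <;> simp_all
        have hb : b = j ∨ b = j₂ ∨ b = j₁ := by
          rcases hy with h|h|h|h|h|h|h <;> simp_all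
        have hed : c.edges = [s(Sum.inl i, Sum.inr j), s(Sum.inr j, Sum.inl i₁),
            s(Sum.inl i₁, Sum.inr j₂), s(Sum.inr j₂, Sum.inl i₂),
            s(Sum.inl i₂, Sum.inr j₁), s(Sum.inr j₁, Sum.inl i)] := by simp [c]
        rw [hed] at hfNe
        simp only [List.mem_cons, List.not_mem_nil, or_false, not_or] at hfNe
        rcases ha with rfl | rfl | rfl <;> rcases hb with rfl | rfl | rfl
        · simp [Sym2.eq_iff] at hfNe
        · exact absurd hab hbad1
        · simp [Sym2.eq_iff] at hfNe
        · simp [Sym2.eq_iff] at hfNe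
        · simp [Sym2.eq_iff] at hfNe
        · rfl
        · exact absurd hab hbad2
        · simp [Sym2.eq_iff] at hfNe
        · simp [Sym2.eq_iff] at hfNe

      rcases hxy with ⟨rfl, rfl⟩ | ⟨rfl, rfl⟩
      · exact main a b hab hx hy hfNe
      · rw [Sym2.eq_swap] at hfNe ⊢
        exact main a b hab hy hx hfNe
  exact hne ((key _ hc₁).trans (key _ hc₂).symm)

end Aux

section Aux2
variable {m n : ℕ}

lemma clique_closure {S D : Finset (Fin m × Fin n)} (hD : IsGridClique S D)
    {i i' : Fin m} {j j' : Fin n} (h1 : (i, j) ∈ D) (h2 : (i', j') ∈ D) : (i, j') ∈ D :=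
  hD.2.2 _ h1 _ h2

lemma extend_col {S D : Finset (Fin m × Fin n)} (hD : IsMaxClique S D)
    {i₁ : Fin m} {j₁ j₂ : Fin n} (h1 : (i₁, j₁) ∈ D) (h3 : (i₁, j₂) ∉ D) :
    ∃ i, (i, j₁) ∈ D ∧ (i, j₂) ∉ S := by
  by_contra hcon
  push_neg at hcon
  set C' : Finset (Fin m × Fin n) := D ∪ D.image (fun p => (p.1, j₂)) with hC'
  have hDC : D ⊆ C' := Finset.subset_union_left
  have hrow : ∀ p ∈ C', ∃ q ∈ D, q.1 = p.1 := by
    intro p hp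
    rcases Finset.mem_union.1 hp with h | h
    · exact ⟨p, h, rfl⟩
    · obtain ⟨q, hq, hqe⟩ := Finset.mem_image.1 h
      exact ⟨q, hq, by rw [← hqe]⟩
  have hclique : IsGridClique S C' := by
    refine ⟨hD.1.1.mono hDC, ?_, ?_⟩
    · intro p hp
      rcases Finset.mem_union.1 hp with h | h
      · exact hD.1.2.1 h
      · obtain ⟨q, hq, hqe⟩ := Finset.mem_image.1 h
        have : (q.1, j₁) ∈ D := clique_closure hD.1 hq h1
        rw [← hqe]
        exact hcon q.1 this
    · intro p hp q hq
      obtain ⟨p', hp', hpe⟩ := hrow p hp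
      rcases Finset.mem_union.1 hq with h | h
      · exact hDC (by rw [← hpe]; exact clique_closure hD.1 hp' h)
      · obtain ⟨q', hq', hqe⟩ := Finset.mem_image.1 h
        have : (p.1, j₂) ∈ D.image (fun p => (p.1, j₂)) :=
          Finset.mem_image.2 ⟨p', hp', by rw [hpe]⟩
        have hq2 : q.2 = j₂ := by rw [← hqe]
        rw [hq2]
        exact Finset.mem_union_right _ this
  have := hD.2 C' hclique hDC
  apply h3
  rw [this]
  exact Finset.mem_union_right _ (Finset.mem_image.2 ⟨(i₁, j₁), h1, rfl⟩)

lemma extend_row {S D : Finset (Fin m × Fin n)} (hD : IsMaxClique S D)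
    {i₁ i₂ : Fin m} {j₁ : Fin n} (h1 : (i₁, j₁) ∈ D) (h3 : (i₂, j₁) ∉ D) :
    ∃ j, (i₁, j) ∈ D ∧ (i₂, j) ∉ S := by
  by_contra hcon
  push_neg at hcon
  set C' : Finset (Fin m × Fin n) := D ∪ D.image (fun p => (i₂, p.2)) with hC'
  have hDC : D ⊆ C' := Finset.subset_union_left
  have hcol : ∀ p ∈ C', ∃ q ∈ D, q.2 = p.2 := by
    intro p hp
    rcases Finset.mem_union.1 hp with h | h
    · exact ⟨p, h, rfl⟩
    · obtain ⟨q, hq, hqe⟩ := Finset.mem_image.1 h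
      exact ⟨q, hq, by rw [← hqe]⟩
  have hclique : IsGridClique S C' := by
    refine ⟨hD.1.1.mono hDC, ?_, ?_⟩
    · intro p hp
      rcases Finset.mem_union.1 hp with h | h
      · exact hD.1.2.1 h
      · obtain ⟨q, hq, hqe⟩ := Finset.mem_image.1 h
        have : (i₁, q.2) ∈ D := clique_closure hD.1 h1 hq
        rw [← hqe]
        exact hcon q.2 this
    · intro p hp q hq
      obtain ⟨q', hq', hqe⟩ := hcol q hq
      rcases Finset.mem_union.1 hp with h | h
      · exact hDC (by rw [← hqe]; exact clique_closure hD.1 h hq')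
      · obtain ⟨p', hp', hpe⟩ := Finset.mem_image.1 h
        have : (i₂, q.2) ∈ D.image (fun p => (i₂, p.2)) :=
          Finset.mem_image.2 ⟨q', hq', by rw [hqe]⟩
        have hp1 : p.1 = i₂ := by rw [← hpe]
        rw [hp1]
        exact Finset.mem_union_right _ this
  have := hD.2 C' hclique hDC
  apply h3
  rw [this]
  exact Finset.mem_union_right _ (Finset.mem_image.2 ⟨(i₁, j₁), h1, rfl⟩)

/-- Lemma A: a maximal clique containing one corner of a rectangle in `S`
contains an adjacent corner. -/
lemma keyA {S : Finset (Fin m × Fin n)} (hS : DoublyChordalBipartite (qiGraph m n S))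
    {D : Finset (Fin m × Fin n)} (hD : IsMaxClique S D)
    {i₁ i₂ : Fin m} {j₁ j₂ : Fin n} (h11 : (i₁, j₁) ∈ D)
    (h12 : (i₁, j₂) ∈ S) (h21 : (i₂, j₁) ∈ S) (h22 : (i₂, j₂) ∈ S) :
    (i₁, j₂) ∈ D ∨ (i₂, j₁) ∈ D := by
  by_contra hcon
  push_neg at hcon
  obtain ⟨hA, hB⟩ := hcon
  obtain ⟨i, hij₁D, hbad1⟩ := extend_col hD h11 hA
  obtain ⟨j, hi₁jD, hbad2⟩ := extend_row hD h11 hB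
  have hijD : (i, j) ∈ D := clique_closure hD.1 hij₁D hi₁jD
  have hsub := hD.1.2.1
  refine no_hexagon hS ?_ ?_ ?_ ?_ ?_ ?_ (hsub hijD) (hsub hij₁D) (hsub hi₁jD)
    h12 h21 h22 hbad1 hbad2
  · rintro rfl; exact hbad1 h12
  · rintro rfl; exact hbad1 h22
  · rintro rfl; exact hB h11
  · rintro rfl; exact hbad2 h21
  · rintro rfl; exact hbad2 h22
  · rintro rfl; exact hA h11

end Aux2

/-- `Max(i₁j₁) ∪ Max(i₂j₂) = Max(i₁j₂) ∪ Max(i₂j₁)` as multisets. -/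
theorem maxCliques_multiset_swap (m n : ℕ) (S : Finset (Fin m × Fin n))
    (hS : DoublyChordalBipartite (qiGraph m n S)) (i₁ i₂ : Fin m) (j₁ j₂ : Fin n)
    (h11 : (i₁, j₁) ∈ S) (h12 : (i₁, j₂) ∈ S) (h21 : (i₂, j₁) ∈ S) (h22 : (i₂, j₂) ∈ S) :
    (maxCliquesAt S (i₁, j₁)).val + (maxCliquesAt S (i₂, j₂)).val =
      (maxCliquesAt S (i₁, j₂)).val + (maxCliquesAt S (i₂, j₁)).val := by
  have cnt : ∀ (T : Finset (Finset (Fin m × Fin n))) (D : Finset (Fin m × Fin n)),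
      T.val.count D = if D ∈ T then 1 else 0 := by
    intro T D
    split
    · exact Multiset.count_eq_one_of_mem T.nodup ‹_›
    · exact Multiset.count_eq_zero_of_notMem ‹_›
  rw [Multiset.ext]
  intro D
  simp only [Multiset.count_add, cnt, maxCliquesAt, Finset.mem_filter]
  by_cases hDm : D ∈ maxCliques S
  swap
  · simp [hDm]
  have hMax : IsMaxClique S D := (Finset.mem_filter.1 hDm).2
  have f1 : (i₁, j₂) ∈ D → (i₂, j₁) ∈ D → (i₁, j₁) ∈ D ∧ (i₂, j₂) ∈ D :=
    fun a b => ⟨clique_closure hMax.1 a b, clique_closure hMax.1 b a⟩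
  have f2 : (i₁, j₁) ∈ D → (i₂, j₂) ∈ D → (i₁, j₂) ∈ D ∧ (i₂, j₁) ∈ D :=
    fun a b => ⟨clique_closure hMax.1 a b, clique_closure hMax.1 b a⟩
  have f3 : (i₁, j₁) ∈ D → (i₁, j₂) ∈ D ∨ (i₂, j₁) ∈ D :=
    fun h => keyA hS hMax h h12 h21 h22
  have f4 : (i₂, j₂) ∈ D → (i₂, j₁) ∈ D ∨ (i₁, j₂) ∈ D :=
    fun h => keyA hS hMax h h21 h12 h11
  have f5 : (i₁, j₂) ∈ D → (i₁, j₁) ∈ D ∨ (i₂, j₂) ∈ D :=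
    fun h => keyA hS hMax h h11 h22 h21
  have f6 : (i₂, j₁) ∈ D → (i₂, j₂) ∈ D ∨ (i₁, j₁) ∈ D :=
    fun h => keyA hS hMax h h22 h11 h12
  by_cases a : (i₁, j₁) ∈ D <;> by_cases b : (i₂, j₂) ∈ D <;>
    by_cases c : (i₁, j₂) ∈ D <;> by_cases d : (i₂, j₁) ∈ D <;>
    simp_all
end

section
/- Let S_k ⊆ [k] × [k] index the edges of a 2k-cycle: S_k = {(i,i) : i ∈ [k]} ∪ {(i,i+1) : i ∈ [k-1]} ∪ {(k,1)}. For generic data u ∈ ℝ_{>0}^{S_k}, the likelihood equations for the quasi-independence model M_{S_k} reduce to the univariate polynomial equation ∏_{i=1}^{k}(u_{i,i} + α) − ∏_{i=1}^{k}(u_{i,i+1} − α) = 0 (indices mod k), a polynomial in α of degree k if k is odd and degree k−1 if k is even. Consequently the ML-degree of M_{S_k} is k if k is odd and k−1 if k is even. -/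
open Polynomial

/-- for the quasi-independence model of a `2k`-cycle, the likelihood
equations for positive data `u` (here `a i = u_{i,i}`, `b i = u_{i,i+1}`) reduce to the
univariate polynomial `f(α) = ∏ (u_{i,i} + α) − ∏ (u_{i,i+1} − α)`, which has degree `k`
if `k` is odd and `k − 1` if `k` is even; all of its complex roots (the critical points)
lie outside the arrangement where some model coordinate vanishes, and their number
(the ML-degree of `M_{S_k}`) is `k` if `k` is odd and `k − 1` if `k` is even. -/
theorem cycle_ML_degree (k : ℕ) (hk : 3 ≤ k) (a b : Fin k → ℝ)
    (ha : ∀ i, 0 < a i) (hb : ∀ i, 0 < b i) :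
    let f : Polynomial ℂ :=
      (∏ i : Fin k, (X + C (a i : ℂ))) - ∏ i : Fin k, (C (b i : ℂ) - X)
    f.natDegree = (if Odd k then k else k - 1) ∧
    f.roots.card = (if Odd k then k else k - 1) ∧
    ∀ α ∈ f.roots, (∀ i, (a i : ℂ) + α ≠ 0) ∧ ∀ i, (b i : ℂ) - α ≠ 0 := by
  intro f
  set P : Polynomial ℂ := ∏ i : Fin k, (X + C (a i : ℂ)) with hP
  set Q : Polynomial ℂ := ∏ i : Fin k, (C (b i : ℂ) - X) with hQ
  set R : Polynomial ℂ := ∏ i : Fin k, (X + C ((-(b i) : ℝ) : ℂ)) with hR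
  have hPm : P.Monic := monic_prod_of_monic _ _ fun i _ => monic_X_add_C _
  have hRm : R.Monic := monic_prod_of_monic _ _ fun i _ => monic_X_add_C _
  have hPd : P.natDegree = k := by
    rw [hP, natDegree_prod_of_monic _ _ fun i _ => monic_X_add_C _]
    simp
  have hRd : R.natDegree = k := by
    rw [hR, natDegree_prod_of_monic _ _ fun i _ => monic_X_add_C _]
    simp only [natDegree_X_add_C]
    simp
  have hQR : Q = (-1) ^ k * R := by
    rw [hQ, hR]
    have hpow : ((-1 : Polynomial ℂ)) ^ k = ∏ _i : Fin k, (-1 : Polynomial ℂ) := by simp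
    rw [hpow, ← Finset.prod_mul_distrib]
    apply Finset.prod_congr rfl
    intro i _
    push_cast [map_neg]
    ring
  -- degree computation
  have hdeg : f.natDegree = (if Odd k then k else k - 1) := by
    by_cases hodd : Odd k
    · -- f = P + R, coeff k = 2
      have hQR' : Q = -R := by rw [hQR, hodd.neg_one_pow]; ring
      have hfPR : f = P + R := by
        show P - Q = P + R
        rw [hQR']; ring
      have hcoeff : f.coeff k = 2 := by
        rw [hfPR, coeff_add, ← hPd, hPm.coeff_natDegree, hPd, ← hRd,
          hRm.coeff_natDegree]
        norm_num
      have h1 : k ≤ f.natDegree := le_natDegree_of_ne_zero (by rw [hcoeff]; norm_num)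
      have h2 : f.natDegree ≤ k := by
        rw [hfPR]
        exact (natDegree_add_le _ _).trans (by rw [hPd, hRd]; simp)
      simp [hodd, le_antisymm h2 h1]
    · -- k even : f = P - R
      have hQR' : Q = R := by
        rw [hQR, (Nat.not_odd_iff_even.mp hodd).neg_one_pow]; ring
      have hfPR : f = P - R := by
        show P - Q = P - R
        rw [hQR']
      have hsum : (0:ℝ) < (∑ i, a i) + ∑ i, b i := by
        have : (0:ℝ) < ∑ i, a i :=
          Finset.sum_pos (fun i _ => ha i) (Finset.univ_nonempty_iff.mpr ⟨⟨0, by omega⟩⟩)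
        have hb' : (0:ℝ) ≤ ∑ i, b i := Finset.sum_nonneg fun i _ => (hb i).le
        linarith
      have hcoeff : f.coeff (k - 1) = (((∑ i, a i) + ∑ i, b i : ℝ) : ℂ) := by
        have hPn : P.nextCoeff = ∑ i, ((a i : ℝ) : ℂ) := by
          rw [hP, Monic.nextCoeff_prod _ _ fun i _ => monic_X_add_C _]
          simp only [nextCoeff_X_add_C]
        have hRn : R.nextCoeff = ∑ i, ((-(b i) : ℝ) : ℂ) := by
          rw [hR, Monic.nextCoeff_prod _ _ fun i _ => monic_X_add_C _]
          simp only [nextCoeff_X_add_C]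
        have hPc : P.coeff (k - 1) = ∑ i, ((a i : ℝ) : ℂ) := by
          have := nextCoeff_of_natDegree_pos (p := P) (by omega : 0 < P.natDegree)
          rw [hPd] at this; rw [← this, hPn]
        have hRc : R.coeff (k - 1) = ∑ i, ((-(b i) : ℝ) : ℂ) := by
          have := nextCoeff_of_natDegree_pos (p := R) (by omega : 0 < R.natDegree)
          rw [hRd] at this; rw [← this, hRn]
        rw [hfPR, coeff_sub, hPc, hRc, ← Finset.sum_sub_distrib]
        push_cast
        simp [sub_neg_eq_add, Finset.sum_add_distrib]
      have hcne : f.coeff (k - 1) ≠ 0 := by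
        rw [hcoeff]
        exact_mod_cast ne_of_gt hsum
      have h1 : k - 1 ≤ f.natDegree := le_natDegree_of_ne_zero hcne
      have hfne : f ≠ 0 := fun h => hcne (by simp [h])
      have h2 : f.natDegree < k := by
        rw [natDegree_lt_iff_degree_lt hfne]
        have hd : P.degree = R.degree := by
          rw [degree_eq_natDegree hPm.ne_zero, degree_eq_natDegree hRm.ne_zero, hPd, hRd]
        have hlt := degree_sub_lt hd hPm.ne_zero
          (by rw [hPm.leadingCoeff, hRm.leadingCoeff])
        rw [← hfPR] at hlt
        calc f.degree < P.degree := hlt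
          _ = (k : ℕ) := by rw [degree_eq_natDegree hPm.ne_zero, hPd]
      simp [hodd]
      omega
  have hfne : f ≠ 0 := by
    intro h
    rw [h, natDegree_zero] at hdeg
    by_cases hodd : Odd k <;> simp [hodd] at hdeg <;> omega
  have hroots : f.roots.card = (if Odd k then k else k - 1) := by
    rw [← hdeg]
    exact (splits_iff_card_roots.mp (IsAlgClosed.splits f))
  refine ⟨hdeg, hroots, ?_⟩
  intro α hα
  have heval : P.eval α = Q.eval α := by
    have : f.eval α = 0 := (mem_roots hfne).mp hα
    rw [show f = P - Q from rfl, eval_sub, sub_eq_zero] at this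
    exact this
  have hPe : P.eval α = ∏ i, (α + (a i : ℂ)) := by simp [hP, eval_prod]
  have hQe : Q.eval α = ∏ i, ((b i : ℂ) - α) := by simp [hQ, eval_prod]
  constructor
  · intro i hi
    have h0 : P.eval α = 0 := by
      rw [hPe]
      exact Finset.prod_eq_zero (Finset.mem_univ i) (by rw [add_comm]; exact hi)
    rw [h0] at heval
    rw [hQe] at heval
    obtain ⟨j, _, hj⟩ := Finset.prod_eq_zero_iff.mp heval.symm
    have hαv : α = -(a i : ℂ) := by linear_combination hi
    have hαv' : α = (b j : ℂ) := by linear_combination -hj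
    rw [hαv] at hαv'
    have : -(a i) = b j := by exact_mod_cast hαv'
    have := ha i; have := hb j; linarith
  · intro i hi
    have h0 : Q.eval α = 0 := by
      rw [hQe]
      exact Finset.prod_eq_zero (Finset.mem_univ i) hi
    rw [h0] at heval
    rw [hPe] at heval
    obtain ⟨j, _, hj⟩ := Finset.prod_eq_zero_iff.mp heval
    have hαv : α = -(a j : ℂ) := by linear_combination hj
    have hαv' : α = (b i : ℂ) := by linear_combination -hi
    rw [hαv] at hαv'
    have : -(a j) = b i := by exact_mod_cast hαv'
    have := ha j; have := hb i; linarith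
end

section
/- Let S ⊆ [m] × [n] with chordal bipartite graph G_S. Then the toric vanishing ideal I(M_S) ⊆ ℂ[p_{ij} : (i,j) ∈ S] of the quasi-independence model is generated by the binomials p_{ij} p_{kℓ} − p_{iℓ} p_{kj} over all quadruples with (i,j),(k,ℓ),(i,ℓ),(k,j) ∈ S. -/
open Finset

open scoped Classical

variable {m n : ℕ}

/-!
By the standard toric argument, the kernel of the monomial map `p_x ↦ s_i t_j` is spanned by the
binomials `p^d - p^e` whose exponent vectors `d, e` have the same row and column margins. To reduce
such a binomial to quadrics, walk alternately through the supports of `d` and `e`, moving along a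
column from `d` to `e` and along a row from `e` back to `d`; the walk closes up, and a shortest
closed one is a cycle of `G_S`. Replacing the `d`-cells of that cycle by its `e`-cells changes
`p^d` modulo the quadrics only by the cycle binomial, and afterwards `d` and `e` share a variable,
which can be cancelled to lower the degree. Cycle binomials lie in the ideal by induction on the
length: a 4-cycle gives a quadric, and a longer cycle has a chord, which splits it into two shorter
cycles whose binomials combine to the original one.
-/

namespace MvPolynomial

variable {σ τ R : Type*} [CommRing R]

theorem monomial_eq_smul_monomial_one (d : σ →₀ ℕ) (a : R) :
    monomial d a = a • monomial d (1 : R) := by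
  rw [smul_monomial, smul_eq_mul, mul_one]

theorem ker_le_of_monomial_sub_mem (φ : MvPolynomial σ R →ₐ[R] MvPolynomial τ R)
    (ν : (σ →₀ ℕ) → (τ →₀ ℕ)) (hφ : ∀ d, φ (monomial d 1) = monomial (ν d) 1)
    (I : Ideal (MvPolynomial σ R))
    (hI : ∀ d e, ν d = ν e → monomial d 1 - monomial e 1 ∈ I) :
    RingHom.ker φ ≤ I := by
  intro f hf
  rw [← Ideal.Quotient.eq_zero_iff_mem]
  let π := Ideal.Quotient.mkₐ R I
  have hfiber : ∀ u, ∑ c ∈ f.support with ν c = u, f.coeff c = 0 := fun u => by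
    have : φ f = ∑ c ∈ f.support, monomial (ν c) (f.coeff c) := by
      conv_lhs => rw [f.as_sum]
      simp only [map_sum, monomial_eq_smul_monomial_one _ (f.coeff _), map_smul, hφ]
    simpa [this, coeff_sum, coeff_monomial, Finset.sum_filter] using
      congrArg (coeff u) ((RingHom.mem_ker).mp hf)
  -- Modulo `I` the monomials in a fiber of `ν` agree, and `f`'s coefficients on a fiber sum to `0`.
  calc π f = ∑ c ∈ f.support, f.coeff c • π (monomial c 1) := by
        conv_lhs => rw [f.as_sum]
        simp only [map_sum, monomial_eq_smul_monomial_one _ (f.coeff _), map_smul]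
    _ = ∑ u ∈ f.support.image ν, ∑ c ∈ f.support with ν c = u, f.coeff c • π (monomial c 1) :=
        (Finset.sum_fiberwise_of_maps_to (fun c hc => Finset.mem_image_of_mem ν hc) _).symm
    _ = 0 := Finset.sum_eq_zero fun u hu => by
        obtain ⟨c₀, -, rfl⟩ := Finset.mem_image.mp hu
        have hrep : ∀ c ∈ {c ∈ f.support | ν c = ν c₀}, π (monomial c 1) = π (monomial c₀ 1) :=
          fun c hc => Ideal.Quotient.eq.mpr (hI c c₀ (Finset.mem_filter.mp hc).2)
        rw [Finset.sum_congr rfl fun c hc => by rw [hrep c hc], ← Finset.sum_smul, hfiber,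
          zero_smul]

end MvPolynomial

theorem Finsupp.sum_support_filter_ne_zero_iff {ι : Type*} (f : ι →₀ ℕ) (p : ι → Prop)
    [DecidablePred p] : ∑ x ∈ f.support with p x, f x ≠ 0 ↔ ∃ x ∈ f.support, p x := by
  simp +contextual [Finset.sum_eq_zero_iff]

namespace QuasiIndependence

open MvPolynomial

section AltCycle

variable {α β : Type*} {k : ℕ}

theorem injOn_Iio_of_forall_lt {γ : Type*} {f : ℕ → γ} (hf : ∀ a b, a < b → b < k → f a ≠ f b) :
    Set.InjOn f (Set.Iio k) := by
  intro x hx y hy hxy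
  by_contra hne
  rcases Nat.lt_or_gt_of_ne hne with hlt | hlt
  · exact hf x y hlt hy hxy
  · exact hf y x hlt hx hxy.symm

theorem prod_range_add_mod {M : Type*} [CommMonoid M] (f : ℕ → M) (k a : ℕ) :
    ∏ t ∈ Finset.range k, f ((a + t) % k) = ∏ t ∈ Finset.range k, f t := by
  rcases k with _ | k
  · simp
  rw [← Fin.prod_univ_eq_prod_range, ← Fin.prod_univ_eq_prod_range]
  exact Fintype.prod_equiv (Equiv.addLeft (Fin.ofNat (k + 1) a)) _ _ fun t => by simp [Fin.val_add]

theorem sum_range_add_one_of_eq {M : Type*} [AddCommMonoid M] {f : ℕ → M} (hf : f k = f 0) :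
    ∑ t ∈ Finset.range k, f (t + 1) = ∑ t ∈ Finset.range k, f t := by
  rcases k with _ | k
  · simp
  rw [Finset.sum_range_succ, hf, Finset.sum_range_succ' f]

theorem apply_add_one_mod_of_eq {γ : Type*} {f : ℕ → γ} (hf : f k = f 0) (s : ℕ) :
    f ((s + 1) % k) = f (s % k + 1) := by
  rcases Nat.eq_zero_or_pos k with rfl | hk
  · simp
  rw [← Nat.mod_add_mod]
  rcases (by have := Nat.mod_lt s hk; omega : s % k + 1 < k ∨ s % k + 1 = k) with h | h
  · rw [Nat.mod_eq_of_lt h]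
  · rw [h, Nat.mod_self, hf]

theorem injOn_add_mod {γ : Type*} {f : ℕ → γ} (hf : Set.InjOn f (Set.Iio k)) (a : ℕ) :
    Set.InjOn (fun t => f ((a + t) % k)) (Set.Iio k) := by
  intro x hx y hy hxy
  have hk : 0 < k := by simp at hx; omega
  have := hf (Nat.mod_lt _ hk) (Nat.mod_lt _ hk) hxy
  exact Nat.ModEq.eq_of_lt_of_lt (Nat.ModEq.add_left_cancel' a this) hx hy

theorem injOn_add_left {γ : Type*} {f : ℕ → γ} (hf : Set.InjOn f (Set.Iio k)) (b : ℕ) :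
    Set.InjOn (fun t => f (b + t)) (Set.Iio (k - b)) := fun x hx y hy hxy => by
  have := hf (show b + x < k by simp at hx; omega) (show b + y < k by simp at hy; omega) hxy
  omega

theorem injOn_ite_zero_add {γ : Type*} {f : ℕ → γ} (hf : Set.InjOn f (Set.Iio k)) {b : ℕ}
    (hb : 0 < b) :
    Set.InjOn (fun t => if t = 0 then f 0 else f (b + t)) (Set.Iio (k - b)) := by
  intro x hx y hy hxy
  simp only [Set.mem_Iio] at hx hy
  simp only at hxy
  split_ifs at hxy <;>
    first | omega | (have := hf (by simp; omega) (by simp; omega) hxy; omega)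

/-- Encodes the closed walk `r 0, c 0, r 1, c 1, …, r k = r 0` of the bipartite graph on `α ⊕ β`. -/
structure IsAltCycle (D E : Set (α × β)) (k : ℕ) (r : ℕ → α) (c : ℕ → β) : Prop where
  closed : r k = r 0
  left_mem : ∀ t < k, (r t, c t) ∈ D
  right_mem : ∀ t < k, (r (t + 1), c t) ∈ E

variable {D E : Set (α × β)} {r : ℕ → α} {c : ℕ → β}

theorem IsAltCycle.mono {D' E' : Set (α × β)} (h : IsAltCycle D E k r c) (hD : D ⊆ D')
    (hE : E ⊆ E') : IsAltCycle D' E' k r c :=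
  ⟨h.closed, fun t ht => hD (h.left_mem t ht), fun t ht => hE (h.right_mem t ht)⟩

theorem IsAltCycle.shortcut_row (h : IsAltCycle D E k r c) {a b : ℕ} (hab : a < b) (hb : b ≤ k)
    (hr : r a = r b) : IsAltCycle D E (b - a) (fun t => r (a + t)) (fun t => c (a + t)) where
  closed := by simp [hr, show a + (b - a) = b by omega]
  left_mem t ht := h.left_mem (a + t) (by omega)
  right_mem t ht := h.right_mem (a + t) (by omega)

theorem IsAltCycle.shortcut_col (h : IsAltCycle D E k r c) {a b : ℕ} (hab : a < b) (hb : b < k)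
    (hc : c a = c b) :
    IsAltCycle D E (b - a) (fun t => r (a + 1 + t % (b - a))) (fun t => c (a + 1 + t)) where
  -- the row index wraps around, so that the shortened walk closes up at `r (a + 1)`
  closed := by simp
  left_mem t ht := by
    simpa [Nat.mod_eq_of_lt ht, add_assoc] using h.left_mem (a + 1 + t) (by omega)
  right_mem t ht := by
    rcases (by omega : t + 1 < b - a ∨ t + 1 = b - a) with ht' | ht'
    · simpa [Nat.mod_eq_of_lt ht', add_assoc] using h.right_mem (a + 1 + t) (by omega)
    · simpa [ht', show a + 1 + t = b by omega, ← hc] using h.right_mem a (by omega)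

theorem IsAltCycle.exists_injOn (h : IsAltCycle D E k r c) (hk : 0 < k) :
    ∃ k r c, 0 < k ∧ IsAltCycle D E k r c ∧ Set.InjOn r (Set.Iio k) ∧
      Set.InjOn c (Set.Iio k) := by
  -- A repeated row or column of a shortest closed walk would cut out a shorter one.
  have hex : ∃ k, 0 < k ∧ ∃ r c, IsAltCycle D E k r c := ⟨k, hk, r, c, h⟩
  obtain ⟨hk₀, r₀, c₀, h₀⟩ := Nat.find_spec hex
  have hmin : ∀ k' < Nat.find hex, 0 < k' → ∀ r c, ¬IsAltCycle D E k' r c :=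
    fun k' hk' hpos r c hc => Nat.find_min hex hk' ⟨hpos, r, c, hc⟩
  refine ⟨_, r₀, c₀, hk₀, h₀, injOn_Iio_of_forall_lt fun a b hab hb hr => ?_,
    injOn_Iio_of_forall_lt fun a b hab hb hc => ?_⟩
  · exact hmin (b - a) (by omega) (by omega) _ _ (h₀.shortcut_row hab hb.le hr)
  · exact hmin (b - a) (by omega) (by omega) _ _ (h₀.shortcut_col hab hb hc)

theorem exists_isAltCycle {D E : Finset (α × β)} (hD : D.Nonempty)
    (hDE : ∀ p ∈ D, ∃ q ∈ E, q.2 = p.2) (hED : ∀ q ∈ E, ∃ p ∈ D, p.1 = q.1) :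
    ∃ k r c, 0 < k ∧ IsAltCycle (D : Set (α × β)) E k r c := by
  obtain ⟨p₀, hp₀⟩ := hD
  have : Nonempty (α × β) := ⟨p₀⟩
  -- Alternately move along a column into `E` and along a row back into `D` until a cell repeats.
  choose! f hfE hf using hDE
  choose! g hgD hg using hED
  set s : ℕ → α × β := fun t => (g ∘ f)^[t] p₀
  have hs : ∀ t, s t ∈ D := fun t => by
    induction t with
    | zero => exact hp₀
    | succ t ih => simpa [s, Function.iterate_succ_apply'] using hgD _ (hfE _ ih)
  obtain ⟨i, j, hij, hsij⟩ := D.finite_toSet.exists_lt_map_eq_of_forall_mem hs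
  refine ⟨j - i, fun t => (s (i + t)).1, fun t => (s (i + t)).2, by omega, ?_, ?_, ?_⟩
  · simp [show i + (j - i) = j by omega, hsij]
  · exact fun t _ => hs (i + t)
  · intro t _
    have hst : s (i + (t + 1)) = g (f (s (i + t))) := Function.iterate_succ_apply' _ _ _
    have hcell : ((s (i + (t + 1))).1, (s (i + t)).2) = f (s (i + t)) :=
      Prod.ext (by rw [hst]; exact hg _ (hfE _ (hs _))) (hf _ (hs _)).symm
    rw [Finset.mem_coe, hcell]
    exact hfE _ (hs _)

theorem IsAltCycle.rotate (h : IsAltCycle D E k r c) (a : ℕ) :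
    IsAltCycle D E k (fun t => r ((a + t) % k)) (fun t => c ((a + t) % k)) where
  closed := by simp
  left_mem t ht := h.left_mem _ (Nat.mod_lt _ (by omega))
  right_mem t ht := by
    simpa [← add_assoc, apply_add_one_mod_of_eq h.closed] using
      h.right_mem ((a + t) % k) (Nat.mod_lt _ (by omega))

theorem IsAltCycle.take (h : IsAltCycle D E k r c) {b : ℕ} (hbk : b < k) (hch : (r 0, c b) ∈ E) :
    IsAltCycle D E (b + 1) (Function.update r (b + 1) (r 0)) c where
  closed := by simp
  left_mem t ht := by
    simpa [Function.update_of_ne (show t ≠ b + 1 by omega)] using h.left_mem t (by omega)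
  right_mem t ht := by
    rcases (by omega : t < b ∨ t = b) with ht' | rfl
    · simpa [Function.update_of_ne (show t + 1 ≠ b + 1 by omega)] using h.right_mem t (by omega)
    · simpa using hch

theorem IsAltCycle.drop (h : IsAltCycle D E k r c) {b : ℕ} (hbk : b < k) (hch : (r 0, c b) ∈ D) :
    IsAltCycle D E (k - b) (fun t => if t = 0 then r 0 else r (b + t)) (fun t => c (b + t)) where
  closed := by simp [show k - b ≠ 0 by omega, show b + (k - b) = k by omega, h.closed]
  left_mem t ht := by
    rcases Nat.eq_zero_or_pos t with rfl | ht₀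
    · simpa using hch
    · simpa [ht₀.ne'] using h.left_mem (b + t) (by omega)
  right_mem t ht := by simpa [add_assoc] using h.right_mem (b + t) (by omega)

end AltCycle

section Chord

open SimpleGraph

variable {V : Type*} {G : SimpleGraph V}

def seqWalk (v : ℕ → V) : (N : ℕ) → (∀ i < N, G.Adj (v i) (v (i + 1))) → G.Walk (v 0) (v N)
  | 0, _ => .nil
  | N + 1, h => (seqWalk v N fun i hi => h i (by omega)).concat (h N (by omega))

theorem support_seqWalk (v : ℕ → V) (N : ℕ) (h : ∀ i < N, G.Adj (v i) (v (i + 1))) :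
    (seqWalk v N h).support = (List.range (N + 1)).map v := by
  induction N with
  | zero => rfl
  | succ N ih => simp [seqWalk, ih, List.range_succ]

theorem edges_seqWalk (v : ℕ → V) (N : ℕ) (h : ∀ i < N, G.Adj (v i) (v (i + 1))) :
    (seqWalk v N h).edges = (List.range N).map fun i => s(v i, v (i + 1)) := by
  induction N with
  | zero => rfl
  | succ N ih => simp [seqWalk, ih, List.range_succ]

theorem length_seqWalk (v : ℕ → V) (N : ℕ) (h : ∀ i < N, G.Adj (v i) (v (i + 1))) :
    (seqWalk v N h).length = N := by
  simpa using congrArg List.length (edges_seqWalk v N h)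

theorem exists_chord_of_injOn (hG : ChordalBipartite G) {v : ℕ → V} {N : ℕ} (hN : 5 ≤ N)
    (hadj : ∀ i < N, G.Adj (v i) (v (i + 1))) (hclose : G.Adj (v N) (v 0))
    (hinj : Set.InjOn v (Set.Iic N)) :
    ∃ i j, i + 1 < j ∧ j ≤ N ∧ ¬(i = 0 ∧ j = N) ∧ G.Adj (v i) (v j) := by
  have hpath : (seqWalk v N hadj).IsPath := by
    rw [Walk.isPath_def, support_seqWalk]
    exact List.Nodup.map_on (fun x hx y hy => hinj (by simp at hx; simp; omega)
      (by simp at hy; simp; omega)) List.nodup_range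
  have hclosing : s(v N, v 0) ∉ (seqWalk v N hadj).edges := by
    simp only [edges_seqWalk, List.mem_map, List.mem_range, not_exists, not_and]
    intro i hi he
    rcases Sym2.eq_iff.mp he with ⟨h1, h2⟩ | ⟨h1, h2⟩
    · have := hinj (by simp; omega) (by simp) h1; omega
    · have := hinj (by simp; omega) (by simp) h1
      have := hinj (by simp) (by simp; omega) h2.symm
      omega
  have hcyc := (Walk.cons_isCycle_iff _ hclose).mpr ⟨hpath, hclosing⟩
  obtain ⟨e, he, hne, hsupp⟩ := hG _ _ hcyc (by simp [length_seqWalk]; omega)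
  have key : ∀ i j, i < j → j ≤ N → G.Adj (v i) (v j) → s(v i, v j) ≠ s(v N, v 0) →
      (∀ l < N, s(v l, v (l + 1)) ≠ s(v i, v j)) →
      ∃ i j, i + 1 < j ∧ j ≤ N ∧ ¬(i = 0 ∧ j = N) ∧ G.Adj (v i) (v j) := by
    intro i j hij hj hadj hne₁ hne₂
    refine ⟨i, j, ?_, hj, ?_, hadj⟩
    · by_contra
      obtain rfl : j = i + 1 := by omega
      exact hne₂ i (by omega) rfl
    · rintro ⟨rfl, rfl⟩
      exact hne₁ Sym2.eq_swap
  induction e using Sym2.ind with | h x y => ?_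
  simp only [Walk.support_cons, support_seqWalk, List.mem_cons, List.mem_map, List.mem_range]
    at hsupp
  have hmem : ∀ z ∈ s(x, y), ∃ a ≤ N, v a = z := fun z hz =>
    (hsupp z hz).elim (fun h => ⟨N, le_rfl, h.symm⟩) fun ⟨a, ha, h⟩ => ⟨a, by omega, h⟩
  obtain ⟨i, hi, rfl⟩ := hmem x (Sym2.mem_mk_left x y)
  obtain ⟨j, hj, rfl⟩ := hmem _ (Sym2.mem_mk_right _ y)
  rw [mem_edgeSet] at he
  simp only [Walk.edges_cons, edges_seqWalk, List.mem_cons, List.mem_map, List.mem_range, not_or,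
    not_exists, not_and] at hne
  rcases Nat.lt_or_gt_of_ne (fun h : i = j => G.ne_of_adj he (congrArg v h)) with h | h
  · exact key i j h hj he hne.1 hne.2
  · rw [Sym2.eq_swap] at hne
    exact key j i h hi he.symm hne.1 hne.2

end Chord

section QIGraph

variable {m n : ℕ} {S : Finset (Fin m × Fin n)}

@[simp]
theorem qiGraph_adj_inl_inr {i : Fin m} {j : Fin n} :
    (qiGraph m n S).Adj (Sum.inl i) (Sum.inr j) ↔ (i, j) ∈ S := by
  simp [qiGraph]

@[simp]
theorem qiGraph_adj_inr_inl {i : Fin m} {j : Fin n} :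
    (qiGraph m n S).Adj (Sum.inr j) (Sum.inl i) ↔ (i, j) ∈ S := by
  simp [qiGraph]

@[simp]
theorem not_qiGraph_adj_inl_inl {i i' : Fin m} : ¬(qiGraph m n S).Adj (Sum.inl i) (Sum.inl i') := by
  simp [qiGraph]

@[simp]
theorem not_qiGraph_adj_inr_inr {j j' : Fin n} : ¬(qiGraph m n S).Adj (Sum.inr j) (Sum.inr j') := by
  simp [qiGraph]

def altVertex (r : ℕ → Fin m) (c : ℕ → Fin n) (i : ℕ) : Fin m ⊕ Fin n :=
  if i % 2 = 0 then Sum.inl (r (i / 2)) else Sum.inr (c (i / 2))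

theorem altVertex_two_mul (r : ℕ → Fin m) (c : ℕ → Fin n) (t : ℕ) :
    altVertex r c (2 * t) = Sum.inl (r t) := by
  simp [altVertex]

theorem altVertex_two_mul_add_one (r : ℕ → Fin m) (c : ℕ → Fin n) (t : ℕ) :
    altVertex r c (2 * t + 1) = Sum.inr (c t) := by
  simp [altVertex, Nat.add_mod, Nat.add_div]

theorem IsAltCycle.exists_chord (hS : ChordalBipartite (qiGraph m n S)) {k : ℕ} {r : ℕ → Fin m}
    {c : ℕ → Fin n} (h : IsAltCycle (S : Set (Fin m × Fin n)) S k r c)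
    (hr : Set.InjOn r (Set.Iio k)) (hc : Set.InjOn c (Set.Iio k)) (hk : 3 ≤ k) :
    ∃ a < k, ∃ b, 0 < b ∧ b + 2 ≤ k ∧ (r a, c ((a + b) % k)) ∈ S := by
  have hadj : ∀ i < 2 * k - 1,
      (qiGraph m n S).Adj (altVertex r c i) (altVertex r c (i + 1)) := by
    intro i hi
    obtain ⟨t, rfl | rfl⟩ := Nat.even_or_odd' i
    · rw [altVertex_two_mul, altVertex_two_mul_add_one, qiGraph_adj_inl_inr]
      exact h.left_mem t (by omega)
    · rw [altVertex_two_mul_add_one, show 2 * t + 1 + 1 = 2 * (t + 1) by ring, altVertex_two_mul,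
        qiGraph_adj_inr_inl]
      exact h.right_mem t (by omega)
  have hclose : (qiGraph m n S).Adj (altVertex r c (2 * k - 1)) (altVertex r c 0) := by
    have := h.right_mem (k - 1) (by omega)
    rw [Nat.sub_add_cancel (by omega), h.closed] at this
    rwa [show 2 * k - 1 = 2 * (k - 1) + 1 by omega, altVertex_two_mul_add_one,
      show (0 : ℕ) = 2 * 0 from rfl, altVertex_two_mul, qiGraph_adj_inr_inl]
  have hinj : Set.InjOn (altVertex r c) (Set.Iic (2 * k - 1)) := by
    intro x hx y hy hxy
    simp only [Set.mem_Iic] at hx hy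
    obtain ⟨a, rfl | rfl⟩ := Nat.even_or_odd' x <;> obtain ⟨b, rfl | rfl⟩ := Nat.even_or_odd' y <;>
      simp only [altVertex_two_mul, altVertex_two_mul_add_one, Sum.inl.injEq, Sum.inr.injEq,
        reduceCtorEq] at hxy
    · rw [hr (by simp; omega) (by simp; omega) hxy]
    · rw [hc (by simp; omega) (by simp; omega) hxy]
  obtain ⟨i, j, hij, hj, hend, hadj⟩ := exists_chord_of_injOn hS (by omega) hadj hclose hinj
  obtain ⟨a, rfl | rfl⟩ := Nat.even_or_odd' i <;> obtain ⟨b, rfl | rfl⟩ := Nat.even_or_odd' j <;>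
    simp only [altVertex_two_mul, altVertex_two_mul_add_one, qiGraph_adj_inl_inr,
      qiGraph_adj_inr_inl, not_qiGraph_adj_inl_inl, not_qiGraph_adj_inr_inr] at hadj
  · refine ⟨a, by omega, b - a, by omega, by omega, ?_⟩
    rwa [show a + (b - a) = b by omega, Nat.mod_eq_of_lt (by omega)]
  · refine ⟨b, by omega, k + a - b, by omega, by omega, ?_⟩
    rwa [show b + (k + a - b) = a + k by omega, Nat.add_mod_right, Nat.mod_eq_of_lt (by omega)]

end QIGraph

section Parametrization

variable {m n : ℕ} (R : Type*) [CommRing R] (S : Finset (Fin m × Fin n))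

noncomputable def qiMap : MvPolynomial S R →ₐ[R] MvPolynomial (Fin m ⊕ Fin n) R :=
  aeval fun x => X (Sum.inl x.1.1) * X (Sum.inr x.1.2)

def quadrics : Set (MvPolynomial S R) :=
  {f | ∃ (i k : Fin m) (j l : Fin n) (h1 : (i, j) ∈ S) (h2 : (k, l) ∈ S)
        (h3 : (i, l) ∈ S) (h4 : (k, j) ∈ S),
        f = X ⟨(i, j), h1⟩ * X ⟨(k, l), h2⟩ - X ⟨(i, l), h3⟩ * X ⟨(k, j), h4⟩}

noncomputable def qiColumn (p : Fin m × Fin n) : Fin m ⊕ Fin n →₀ ℕ :=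
  Finsupp.single (Sum.inl p.1) 1 + Finsupp.single (Sum.inr p.2) 1

noncomputable def marginals : (S →₀ ℕ) →ₗ[ℕ] (Fin m ⊕ Fin n →₀ ℕ) :=
  Finsupp.linearCombination ℕ fun x => qiColumn x.1

variable {R S}

theorem qiMap_monomial (d : S →₀ ℕ) (a : R) :
    qiMap R S (monomial d a) = monomial (marginals S d) a := by
  rw [qiMap, aeval_monomial, marginals, Finsupp.linearCombination_apply,
    monomial_finsupp_sum_index, algebraMap_eq]
  congr 1
  refine Finset.prod_congr rfl fun x _ => ?_
  simp only [X, monomial_mul, monomial_pow, one_mul, one_pow, qiColumn]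

theorem span_quadrics_le_ker : Ideal.span (quadrics R S) ≤ RingHom.ker (qiMap R S) := by
  rw [Ideal.span_le]
  rintro f ⟨i, k, j, l, h1, h2, h3, h4, rfl⟩
  simp only [SetLike.mem_coe, RingHom.mem_ker, map_sub, map_mul, qiMap, aeval_X]
  ring

theorem degree_marginals (d : S →₀ ℕ) : (marginals S d).degree = 2 * d.degree := by
  induction d using Finsupp.induction_linear with
  | zero => simp
  | add d e hd he => simp [hd, he, mul_add]
  | single x k => simp [marginals, qiColumn, two_mul]

theorem eq_zero_of_marginals_eq_zero {d : S →₀ ℕ} (h : marginals S d = 0) : d = 0 := by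
  simpa [← Finsupp.degree_eq_zero_iff, h] using (degree_marginals d).symm

theorem marginals_apply_inl (d : S →₀ ℕ) (i : Fin m) :
    marginals S d (Sum.inl i) = ∑ x ∈ d.support with x.1.1 = i, d x := by
  simp [marginals, Finsupp.linearCombination_apply, Finsupp.sum, qiColumn, Finsupp.single_apply,
    Finset.sum_filter]

theorem marginals_apply_inr (d : S →₀ ℕ) (j : Fin n) :
    marginals S d (Sum.inr j) = ∑ x ∈ d.support with x.1.2 = j, d x := by
  simp [marginals, Finsupp.linearCombination_apply, Finsupp.sum, qiColumn, Finsupp.single_apply,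
    Finset.sum_filter]

theorem exists_row_eq_of_marginals_eq {d e : S →₀ ℕ} (h : marginals S d = marginals S e)
    {x : S} (hx : x ∈ d.support) : ∃ y ∈ e.support, y.1.1 = x.1.1 := by
  have := (Finsupp.sum_support_filter_ne_zero_iff d (fun y : S => y.1.1 = x.1.1)).mpr ⟨x, hx, rfl⟩
  rwa [← marginals_apply_inl, h, marginals_apply_inl,
    Finsupp.sum_support_filter_ne_zero_iff] at this

theorem exists_col_eq_of_marginals_eq {d e : S →₀ ℕ} (h : marginals S d = marginals S e)
    {x : S} (hx : x ∈ d.support) : ∃ y ∈ e.support, y.1.2 = x.1.2 := by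
  have := (Finsupp.sum_support_filter_ne_zero_iff d (fun y : S => y.1.2 = x.1.2)).mpr ⟨x, hx, rfl⟩
  rwa [← marginals_apply_inr, h, marginals_apply_inr,
    Finsupp.sum_support_filter_ne_zero_iff] at this

end Parametrization

section CycleBinomial

variable {m n : ℕ} (R : Type*) [CommRing R] (S : Finset (Fin m × Fin n))

/-- The variable `p_{ij}`, with the junk value `0` off `S`. -/
noncomputable def qiVar (p : Fin m × Fin n) : MvPolynomial S R :=
  if h : p ∈ S then X ⟨p, h⟩ else 0

noncomputable def cellProd (k : ℕ) (p : ℕ → Fin m × Fin n) : MvPolynomial S R :=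
  ∏ t ∈ Finset.range k, qiVar R S (p t)

local notation "π" => Ideal.Quotient.mk (Ideal.span (quadrics R S))

variable {R S}

theorem qiVar_coe (x : S) : qiVar R S x = X x := dif_pos x.2

theorem mk_qiVar_mul_qiVar {i k : Fin m} {j l : Fin n} (h1 : (i, j) ∈ S) (h2 : (k, l) ∈ S)
    (h3 : (i, l) ∈ S) (h4 : (k, j) ∈ S) :
    π (qiVar R S (i, j) * qiVar R S (k, l)) = π (qiVar R S (i, l) * qiVar R S (k, j)) := by
  rw [Ideal.Quotient.eq]
  refine Ideal.subset_span ⟨i, k, j, l, h1, h2, h3, h4, ?_⟩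
  simp only [qiVar, dif_pos h1, dif_pos h2, dif_pos h3, dif_pos h4]

theorem mk_cellProd_eq_of_chord {k : ℕ} {r : ℕ → Fin m} {c : ℕ → Fin n}
    (IH : ∀ k' < k, ∀ (r' : ℕ → Fin m) (c' : ℕ → Fin n),
      IsAltCycle (S : Set (Fin m × Fin n)) S k' r' c' → Set.InjOn r' (Set.Iio k') →
        Set.InjOn c' (Set.Iio k') →
        π (cellProd R S k' fun t => (r' t, c' t)) = π (cellProd R S k' fun t => (r' (t + 1), c' t)))
    (h : IsAltCycle (S : Set (Fin m × Fin n)) S k r c) (hr : Set.InjOn r (Set.Iio k))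
    (hc : Set.InjOn c (Set.Iio k)) {b : ℕ} (hb : 0 < b) (hbk : b + 2 ≤ k)
    (hch : (r 0, c b) ∈ S) :
    π (cellProd R S k fun t => (r t, c t)) = π (cellProd R S k fun t => (r (t + 1), c t)) := by
  -- The chord `(r 0, c b)` closes both `r 0, c 0, …, r b, c b` and `r 0, c b, r (b + 1), …`.
  have hsplit : ∀ (f : ℕ → MvPolynomial S R) (a : ℕ), a ≤ k → ∏ t ∈ Finset.range k, f t =
      (∏ t ∈ Finset.range a, f t) * ∏ t ∈ Finset.range (k - a), f (a + t) :=
    fun f a ha => by rw [← Finset.prod_range_add, Nat.add_sub_cancel' ha]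
  have h₁ := IH (b + 1) (by omega) _ c (h.take (by omega) hch)
    ((hr.mono (Set.Iio_subset_Iio (by omega))).congr fun t ht =>
      (Function.update_of_ne (Nat.ne_of_lt ht) _ _).symm)
    (hc.mono (Set.Iio_subset_Iio (by omega)))
  have h₂ := IH (k - b) (by omega) _ _ (h.drop (by omega) hch) (injOn_ite_zero_add hr hb)
    (injOn_add_left hc b)
  have e₁ : (cellProd R S (b + 1) fun t => (Function.update r (b + 1) (r 0) t, c t)) =
      ∏ t ∈ Finset.range (b + 1), qiVar R S (r t, c t) :=
    Finset.prod_congr rfl fun t ht => by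
      dsimp only
      rw [Function.update_of_ne (by simp at ht; omega)]
  have e₁' : (cellProd R S (b + 1) fun t => (Function.update r (b + 1) (r 0) (t + 1), c t)) =
      (∏ t ∈ Finset.range b, qiVar R S (r (t + 1), c t)) * qiVar R S (r 0, c b) := by
    rw [cellProd, Finset.prod_range_succ, Function.update_self]
    exact congrArg (· * _) (Finset.prod_congr rfl fun t ht => by
      rw [Function.update_of_ne (by simp at ht; omega)])
  have e₂ : (cellProd R S (k - b) fun t => (if t = 0 then r 0 else r (b + t), c (b + t))) =
      qiVar R S (r 0, c b) *
        ∏ t ∈ Finset.range (k - (b + 1)), qiVar R S (r (b + 1 + t), c (b + 1 + t)) := by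
    rw [cellProd, show k - b = k - (b + 1) + 1 by omega, Finset.prod_range_succ', mul_comm]
    simp only [↓reduceIte, Nat.add_one_ne_zero, add_zero]
    exact congrArg _ (Finset.prod_congr rfl fun t _ => by rw [add_comm t 1, ← add_assoc])
  have e₂' : (cellProd R S (k - b) fun t => (if t + 1 = 0 then r 0 else r (b + (t + 1)),
      c (b + t))) = ∏ t ∈ Finset.range (k - b), qiVar R S (r (b + t + 1), c (b + t)) :=
    Finset.prod_congr rfl fun t _ => by simp [add_assoc]
  calc π (cellProd R S k fun t => (r t, c t))
      = π (∏ t ∈ Finset.range (b + 1), qiVar R S (r t, c t)) *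
          π (∏ t ∈ Finset.range (k - (b + 1)), qiVar R S (r (b + 1 + t), c (b + 1 + t))) := by
        rw [cellProd, hsplit _ (b + 1) (by omega), map_mul]
    _ = π (∏ t ∈ Finset.range b, qiVar R S (r (t + 1), c t)) * π (qiVar R S (r 0, c b) *
          ∏ t ∈ Finset.range (k - (b + 1)), qiVar R S (r (b + 1 + t), c (b + 1 + t))) := by
        rw [← e₁, h₁, e₁']
        simp only [map_mul, mul_assoc]
    _ = π (∏ t ∈ Finset.range b, qiVar R S (r (t + 1), c t)) *
          π (∏ t ∈ Finset.range (k - b), qiVar R S (r (b + t + 1), c (b + t))) := by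
        rw [← e₂, h₂, e₂']
    _ = π (cellProd R S k fun t => (r (t + 1), c t)) := by
        rw [cellProd, hsplit _ b (by omega), map_mul]

theorem IsAltCycle.mk_cellProd_eq (hS : ChordalBipartite (qiGraph m n S)) {k : ℕ}
    {r : ℕ → Fin m} {c : ℕ → Fin n} (h : IsAltCycle (S : Set (Fin m × Fin n)) S k r c)
    (hr : Set.InjOn r (Set.Iio k)) (hc : Set.InjOn c (Set.Iio k)) :
    π (cellProd R S k fun t => (r t, c t)) = π (cellProd R S k fun t => (r (t + 1), c t)) := by
  induction k using Nat.strong_induction_on generalizing r c with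
  | _ k IH =>
  rcases (by omega : k = 0 ∨ k = 1 ∨ k = 2 ∨ 3 ≤ k) with rfl | rfl | rfl | hk
  · simp [cellProd]
  · simp [cellProd, h.closed]
  · simp only [cellProd, Finset.prod_range_succ, Finset.prod_range_zero, one_mul, h.closed]
    rw [mul_comm (qiVar R S (r 1, c 0))]
    exact mk_qiVar_mul_qiVar (h.left_mem 0 (by omega)) (h.left_mem 1 (by omega))
      (by simpa [h.closed] using h.right_mem 1 (by omega)) (h.right_mem 0 (by omega))
  · obtain ⟨a, ha, b, hb, hbk, hch⟩ := h.exists_chord hS hr hc hk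
    have hrot := mk_cellProd_eq_of_chord IH (h.rotate a) (injOn_add_mod hr a)
      (injOn_add_mod hc a) hb hbk (by simpa [Nat.mod_eq_of_lt ha] using hch)
    simp only [cellProd, ← add_assoc, apply_add_one_mod_of_eq h.closed] at hrot
    rwa [prod_range_add_mod (fun s => qiVar R S (r s, c s)),
      prod_range_add_mod (fun s => qiVar R S (r (s + 1), c s))] at hrot

end CycleBinomial

section Moves

variable {m n : ℕ} {R : Type*} [CommRing R] {S : Finset (Fin m × Fin n)}

local notation "π" => Ideal.Quotient.mk (Ideal.span (quadrics R S))

def supportCells (d : S →₀ ℕ) : Finset (Fin m × Fin n) :=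
  d.support.map (Function.Embedding.subtype _)

@[to_additive]
theorem prod_coe_eq_prod_range {M : Type*} [CommMonoid M] {T : Finset S} {k : ℕ}
    {p : ℕ → Fin m × Fin n} (hp : Set.InjOn p (Set.Iio k))
    (hT : (Finset.range k).image p = T.map (Function.Embedding.subtype _))
    (g : Fin m × Fin n → M) : ∏ y ∈ T, g y = ∏ t ∈ Finset.range k, g (p t) := by
  calc ∏ y ∈ T, g y = ∏ x ∈ T.map (Function.Embedding.subtype _), g x :=
        (Finset.prod_map T (Function.Embedding.subtype _) g).symm
    _ = ∏ t ∈ Finset.range k, g (p t) := by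
      rw [← hT, Finset.prod_image (by rwa [Finset.coe_range])]

theorem exists_le_monomial_eq_cellProd {d : S →₀ ℕ} {k : ℕ} {p : ℕ → Fin m × Fin n}
    (hp : Set.InjOn p (Set.Iio k)) (hmem : ∀ t < k, p t ∈ supportCells d) :
    ∃ C ≤ d, monomial C (1 : R) = cellProd R S k p ∧
      marginals S C = ∑ t ∈ Finset.range k, qiColumn (p t) ∧ C.degree = k := by
  obtain ⟨T, hTd, hT⟩ := Finset.subset_map_iff.mp (show (Finset.range k).image p ⊆ supportCells d by
    simpa [Finset.image_subset_iff] using hmem)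
  refine ⟨∑ y ∈ T, Finsupp.single y 1, fun y => ?_, ?_, ?_, ?_⟩
  · simp only [Finsupp.finsetSum_apply, Finsupp.single_apply, Finset.sum_ite_eq']
    split_ifs with hy
    · exact Nat.one_le_iff_ne_zero.mpr (Finsupp.mem_support_iff.mp (hTd hy))
    · exact Nat.zero_le _
  · simp only [monomial_sum_one, ← X.eq_def, cellProd, ← prod_coe_eq_prod_range hp hT, qiVar_coe]
  · simp only [map_sum, marginals, Finsupp.linearCombination_single, one_smul]
    exact sum_coe_eq_sum_range hp hT qiColumn
  · simp only [map_sum, Finsupp.degree_single]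
    exact (sum_coe_eq_sum_range hp hT fun _ => 1).trans (by simp)

theorem exists_isAltCycle_supportCells {d e : S →₀ ℕ} (h : marginals S d = marginals S e)
    (hd : d ≠ 0) :
    ∃ k r c, 0 < k ∧ IsAltCycle (supportCells d : Set (Fin m × Fin n)) (supportCells e) k r c := by
  refine exists_isAltCycle ((Finsupp.support_nonempty_iff.mpr hd).map) ?_ ?_
  · simp only [supportCells, Finset.mem_map, Function.Embedding.coe_subtype]
    rintro _ ⟨x, hx, rfl⟩
    obtain ⟨y, hy, hxy⟩ := exists_col_eq_of_marginals_eq h hx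
    exact ⟨y, ⟨y, hy, rfl⟩, hxy⟩
  · simp only [supportCells, Finset.mem_map, Function.Embedding.coe_subtype]
    rintro _ ⟨x, hx, rfl⟩
    obtain ⟨y, hy, hxy⟩ := exists_row_eq_of_marginals_eq h.symm hx
    exact ⟨y, ⟨y, hy, rfl⟩, hxy⟩

theorem IsAltCycle.exists_mk_monomial_eq (hS : ChordalBipartite (qiGraph m n S))
    {d e : S →₀ ℕ} {k : ℕ} {r : ℕ → Fin m} {c : ℕ → Fin n}
    (h : IsAltCycle (supportCells d : Set (Fin m × Fin n)) (supportCells e) k r c)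
    (hr : Set.InjOn r (Set.Iio k)) (hc : Set.InjOn c (Set.Iio k)) (hk : 0 < k) :
    ∃ d' : S →₀ ℕ, π (monomial d 1) = π (monomial d' 1) ∧ marginals S d' = marginals S d ∧
      ∃ x ∈ d'.support, x ∈ e.support := by
  have hcells : ∀ f : S →₀ ℕ, (supportCells f : Set (Fin m × Fin n)) ⊆ S := by
    intro f p hp
    obtain ⟨x, -, rfl⟩ := Finset.mem_map.mp hp
    exact x.2
  obtain ⟨Cd, hCd, hmonD, hmargD, -⟩ := exists_le_monomial_eq_cellProd (R := R)
    (fun x hx y hy hxy => hc hx hy (congrArg Prod.snd hxy)) h.left_mem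
  obtain ⟨Ce, hCe, hmonE, hmargE, hdegE⟩ := exists_le_monomial_eq_cellProd (R := R)
    (fun x hx y hy hxy => hc hx hy (congrArg Prod.snd hxy)) h.right_mem
  have hmarg : marginals S Ce = marginals S Cd := by
    rw [hmargD, hmargE]
    simp only [qiColumn, Finset.sum_add_distrib]
    rw [sum_range_add_one_of_eq (f := fun t => Finsupp.single (Sum.inl (r t)) 1)
      (by simp [h.closed])]
  obtain ⟨x, hx⟩ : Ce.support.Nonempty := by
    rw [Finsupp.support_nonempty_iff]
    rintro rfl
    simp at hdegE
    omega
  refine ⟨d - Cd + Ce, ?_, ?_, x, ?_, Finsupp.support_mono hCe hx⟩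
  · calc π (monomial d 1) = π (monomial (d - Cd) 1) * π (monomial Cd 1) := by
          rw [← map_mul, monomial_mul, one_mul, tsub_add_cancel_of_le hCd]
      _ = π (monomial (d - Cd) 1) * π (monomial Ce 1) := by
          rw [hmonD, hmonE, ((h.mono (hcells d) (hcells e)).mk_cellProd_eq hS hr hc)]
      _ = π (monomial (d - Cd + Ce) 1) := by rw [← map_mul, monomial_mul, one_mul]
  · rw [map_add, hmarg, ← map_add, tsub_add_cancel_of_le hCd]
  · rw [Finsupp.mem_support_iff, Finsupp.add_apply]
    exact fun h0 => Finsupp.mem_support_iff.mp hx (by omega)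

theorem mk_monomial_eq_of_mem_support {d e : S →₀ ℕ}
    (IH : ∀ d' e' : S →₀ ℕ, d'.degree < d.degree → marginals S d' = marginals S e' →
      π (monomial d' 1) = π (monomial e' 1))
    (h : marginals S d = marginals S e) {x : S} (hxd : x ∈ d.support) (hxe : x ∈ e.support) :
    π (monomial d 1) = π (monomial e 1) := by
  have hx : ∀ {f : S →₀ ℕ}, x ∈ f.support → f - Finsupp.single x 1 + Finsupp.single x 1 = f :=
    fun hf => tsub_add_cancel_of_le (Finsupp.single_le_iff.mpr
      (Nat.one_le_iff_ne_zero.mpr (Finsupp.mem_support_iff.mp hf)))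
  have hsplit : ∀ {f : S →₀ ℕ}, x ∈ f.support → π (monomial f 1) =
      π (monomial (f - Finsupp.single x 1) 1) * π (monomial (Finsupp.single x 1) 1) :=
    fun hf => by rw [← map_mul, monomial_mul, one_mul, hx hf]
  have hmarg : marginals S (d - Finsupp.single x 1) = marginals S (e - Finsupp.single x 1) :=
    add_right_cancel (b := marginals S (Finsupp.single x 1)) (by
      rw [← map_add, ← map_add, hx hxd, hx hxe, h])
  have hdeg : (d - Finsupp.single x 1).degree < d.degree := by
    conv_rhs => rw [← hx hxd]
    rw [map_add, Finsupp.degree_single]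
    omega
  rw [hsplit hxd, hsplit hxe, IH _ _ hdeg hmarg]

theorem mk_monomial_eq_of_marginals_eq (hS : ChordalBipartite (qiGraph m n S)) {d e : S →₀ ℕ}
    (h : marginals S d = marginals S e) : π (monomial d 1) = π (monomial e 1) := by
  induction hN : d.degree using Nat.strong_induction_on generalizing d e with
  | _ N IH =>
  rcases eq_or_ne d 0 with rfl | hd
  · rw [eq_zero_of_marginals_eq_zero (h.symm.trans (map_zero _))]
  obtain ⟨k, r, c, hk, hcyc⟩ := exists_isAltCycle_supportCells h hd
  obtain ⟨k, r, c, hk, hcyc, hr, hc⟩ := hcyc.exists_injOn hk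
  obtain ⟨d', hdd', hmarg, x, hxd', hxe⟩ := hcyc.exists_mk_monomial_eq (R := R) hS hr hc hk
  have hdeg : d'.degree = d.degree := by
    have := degree_marginals d'
    rw [hmarg, degree_marginals] at this
    omega
  rw [hdd']
  exact mk_monomial_eq_of_mem_support (fun d'' e'' hlt h'' => IH _ (by omega) h'' rfl)
    (hmarg.trans h) hxd' hxe

end Moves

end QuasiIndependence

/-- if `G_S` is chordal bipartite, the toric vanishing ideal of the
quasi-independence model `M_S` (the kernel of `p_{ij} ↦ x_i y_j`) is generated by the
binomials `p_{ij} p_{kℓ} − p_{iℓ} p_{kj}` of the fully observed 2×2 minors. -/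
theorem vanishing_ideal_generated_by_quadrics (m n : ℕ) (S : Finset (Fin m × Fin n))
    (hS : ChordalBipartite (qiGraph m n S)) :
    RingHom.ker (MvPolynomial.aeval (R := ℂ)
        (fun x : {x // x ∈ S} =>
          MvPolynomial.X (Sum.inl x.1.1) * MvPolynomial.X (Sum.inr x.1.2)) :
        MvPolynomial {x // x ∈ S} ℂ →ₐ[ℂ] MvPolynomial (Fin m ⊕ Fin n) ℂ) =
      Ideal.span {f : MvPolynomial {x // x ∈ S} ℂ |
        ∃ (i k : Fin m) (j l : Fin n) (h1 : (i, j) ∈ S) (h2 : (k, l) ∈ S)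
          (h3 : (i, l) ∈ S) (h4 : (k, j) ∈ S),
          f = MvPolynomial.X ⟨(i, j), h1⟩ * MvPolynomial.X ⟨(k, l), h2⟩ -
              MvPolynomial.X ⟨(i, l), h3⟩ * MvPolynomial.X ⟨(k, j), h4⟩} := by
  refine le_antisymm ?_ QuasiIndependence.span_quadrics_le_ker
  refine MvPolynomial.ker_le_of_monomial_sub_mem _ (QuasiIndependence.marginals S)
    (fun d => QuasiIndependence.qiMap_monomial d 1) _ fun d e h => ?_
  exact Ideal.Quotient.eq.mp (QuasiIndependence.mk_monomial_eq_of_marginals_eq hS h)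
end

section
/- A bipartite graph G is doubly chordal bipartite (every cycle of length ≥ 6 has at least two chords) if and only if G is chordal bipartite (every cycle of length ≥ 6 has a chord) and G has no induced subgraph isomorphic to the double-square graph, i.e., the 6-cycle with exactly one chord. -/
open Finset

open scoped Classical

variable {m n : ℕ}

/-- The double-square pattern: a 6-cycle with exactly one chord. -/
def dsPattern : Finset (Fin 3 × Fin 3) :=
  {(0, 0), (0, 1), (1, 0), (1, 1), (1, 2), (2, 1), (2, 2)}

/-- The double-square graph. -/
def doubleSquareGraph : SimpleGraph (Fin 3 ⊕ Fin 3) := qiGraph 3 3 dsPattern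

/-! If a cycle of length at least 6 has a single chord `ab`, the chord cuts it into two cycles
through `ab`. A chord of either of them is a chord of the original cycle other than `ab`, so
both are shorter than 6 by chordality; being even and of length at least 3, both are 4-cycles,
and the six vertices of the original cycle induce a double square. Conversely, the hexagon of
an induced double square is a 6-cycle with exactly one chord. -/

namespace SimpleGraph

variable {V : Type*} {G : SimpleGraph V}

theorem isChord_congr {u v : V} {c : G.Walk u u} {d : G.Walk v v}
    (hE : ∀ e, e ∈ c.edges ↔ e ∈ d.edges) (hS : ∀ x, x ∈ c.support ↔ x ∈ d.support)
    (e : Sym2 V) : IsChord G c e ↔ IsChord G d e := by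
  simp only [IsChord, hE, hS]

theorem isChord_rotate_iff {u v : V} {c : G.Walk v v} (hu : u ∈ c.support) {e : Sym2 V} :
    IsChord G (c.rotate u hu) e ↔ IsChord G c e :=
  isChord_congr (fun _ => (c.rotate_edges u hu).perm.mem_iff)
    (fun _ => c.mem_support_rotate_iff u hu) e

theorem isChord_reverse_iff {v : V} {c : G.Walk v v} {e : Sym2 V} :
    IsChord G c.reverse e ↔ IsChord G c e :=
  isChord_congr (by simp) (by simp) e

theorem Walk.IsCycle.eq_or_eq_of_mem_support_append {a b x : V} {p : G.Walk a b}
    {q : G.Walk b a} (hc : (p.append q).IsCycle) (hxp : x ∈ p.support) (hxq : x ∈ q.support) :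
    x = a ∨ x = b := by
  have hnd := hc.support_nodup
  rw [Walk.tail_support_append] at hnd
  rw [Walk.mem_support_iff] at hxp hxq
  rcases hxp with rfl | hxp
  · exact Or.inl rfl
  rcases hxq with rfl | hxq
  · exact Or.inr rfl
  exact absurd hxq (List.disjoint_of_nodup_append hnd hxp)

theorem Walk.IsCycle.cons_of_append {a b : V} {p : G.Walk a b} {q : G.Walk b a}
    (hc : (p.append q).IsCycle) (hab : G.Adj a b) (hnot : s(a, b) ∉ (p.append q).edges) :
    (Walk.cons hab q).IsCycle := by
  refine (Walk.cons_isCycle_iff q hab).2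
    ⟨hc.isPath_of_append_right (Walk.not_nil_of_ne hab.ne), fun h => hnot ?_⟩
  exact Walk.edges_append p q ▸ List.mem_append_right _ h

theorem isChord_append_of_isChord_cons {a b : V} {p : G.Walk a b} {q : G.Walk b a}
    (hc : (p.append q).IsCycle) (hab : G.Adj a b) {e : Sym2 V}
    (he : IsChord G (Walk.cons hab q) e) : IsChord G (p.append q) e ∧ e ≠ s(a, b) := by
  induction e using Sym2.ind with | _ x y => ?_
  obtain ⟨hxy, hnot, hsupp⟩ := he
  rw [Walk.edges_cons, List.mem_cons, not_or] at hnot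
  obtain ⟨hne, hq⟩ := hnot
  have hend : ∀ z ∈ s(x, y), z ∈ p.support → z = a ∨ z = b := by
    intro z hz hzp
    rcases List.mem_cons.1 (hsupp z hz) with rfl | hzq
    · exact Or.inl rfl
    · exact hc.eq_or_eq_of_mem_support_append hzp hzq
  refine ⟨⟨hxy, fun hmem => ?_, fun z hz => ?_⟩, hne⟩
  · rw [Walk.edges_append, List.mem_append] at hmem
    refine hmem.elim (fun hp => hne ?_) hq
    have hx := hend x (Sym2.mem_mk_left x y) (p.fst_mem_support_of_mem_edges hp)
    have hy := hend y (Sym2.mem_mk_right x y) (p.snd_mem_support_of_mem_edges hp)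
    have hxy' : x ≠ y := G.ne_of_adj hxy
    rcases hx with rfl | rfl <;> rcases hy with rfl | rfl
    exacts [absurd rfl hxy', rfl, Sym2.eq_swap, absurd rfl hxy']
  · rw [Walk.mem_support_append_iff]
    rcases List.mem_cons.1 (hsupp z hz) with rfl | hzq
    exacts [Or.inl p.start_mem_support, Or.inr hzq]

theorem length_eq_three_of_unique_chord (hbip : G.Colorable 2) (hcb : ChordalBipartite G)
    {a b : V} {p : G.Walk a b} {q : G.Walk b a} (hc : (p.append q).IsCycle)
    (hab : IsChord G (p.append q) s(a, b))
    (honly : ∀ e, IsChord G (p.append q) e → e = s(a, b)) : q.length = 3 := by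
  have hadj : G.Adj a b := hab.1
  have hcyc := hc.cons_of_append hadj hab.2.1
  have hshort : (Walk.cons hadj q).length < 6 := by
    by_contra! hlong
    obtain ⟨e, he⟩ := hcb a _ hcyc hlong
    obtain ⟨he', hne⟩ := isChord_append_of_isChord_cons hc hadj he
    exact hne (honly e he')
  have heven := two_colorable_iff_forall_loop_even.1 hbip a (Walk.cons hadj q)
  have hthree := hcyc.three_le_length
  rw [Walk.length_cons] at hshort heven hthree
  obtain ⟨k, hk⟩ := heven
  omega

theorem Walk.exists_eq_cons_cons_cons {u v : V} (p : G.Walk u v) (hp : p.length = 3) :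
    ∃ (x y : V) (h₁ : G.Adj u x) (h₂ : G.Adj x y) (h₃ : G.Adj y v),
      p = .cons h₁ (.cons h₂ (.cons h₃ .nil)) := by
  match p, hp with
  | .cons h₁ (.cons h₂ (.cons h₃ .nil)), _ => exact ⟨_, _, h₁, h₂, h₃, rfl⟩

end SimpleGraph

open SimpleGraph Sum

instance : DecidableRel doubleSquareGraph.Adj := fun x y =>
  decidable_of_iff (x ≠ y ∧ ((∃ p, p ∈ dsPattern ∧ x = inl p.1 ∧ y = inr p.2) ∨
      (∃ p, p ∈ dsPattern ∧ y = inl p.1 ∧ x = inr p.2)))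
    (by rw [doubleSquareGraph, qiGraph, fromRel_adj])

def dsHexagon : doubleSquareGraph.Walk (inl 1) (inl 1) :=
  .cons (v := inr 0) (by decide) <| .cons (v := inl 0) (by decide) <|
    .cons (v := inr 1) (by decide) <| .cons (v := inl 2) (by decide) <|
    .cons (v := inr 2) (by decide) <| .cons (by decide) .nil

theorem doubleSquareGraph_adj_iff {u w : Fin 3 ⊕ Fin 3} :
    doubleSquareGraph.Adj u w ↔ s(u, w) ∈ dsHexagon.edges ∨ s(u, w) = s(inl 1, inr 1) := by
  revert u w
  decide

theorem mem_tail_support_dsHexagon (u : Fin 3 ⊕ Fin 3) : u ∈ dsHexagon.support.tail := by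
  rcases u with u | u <;> fin_cases u <;> simp [dsHexagon]

theorem dsHexagon_isCycle : dsHexagon.IsCycle := by
  rw [Walk.isCycle_def, Walk.isTrail_def]
  decide

theorem dsHexagon_length : dsHexagon.length = 6 := rfl

section InducedDoubleSquare

variable {V : Type*} {G : SimpleGraph V}

theorem induced_doubleSquare_iff_unique_chord (F : Fin 3 ⊕ Fin 3 ↪ V) {v : V} {c : G.Walk v v}
    (hE : c.edges = dsHexagon.edges.map (Sym2.map F)) (hS : c.support = dsHexagon.support.map F) :
    (∀ u w, doubleSquareGraph.Adj u w ↔ G.Adj (F u) (F w)) ↔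
      G.Adj (F (inl 1)) (F (inr 1)) ∧ ∀ e, IsChord G c e → e = s(F (inl 1), F (inr 1)) := by
  have hinj : Function.Injective (Sym2.map F) := Sym2.map.injective F.injective
  have hedge : ∀ u w, s(F u, F w) ∈ c.edges ↔ s(u, w) ∈ dsHexagon.edges := fun u w => by
    rw [hE, ← Sym2.map_mk, List.mem_map_of_injective hinj]
  have hsupp : ∀ u, F u ∈ c.support := fun u =>
    hS ▸ List.mem_map_of_mem (List.mem_of_mem_tail (mem_tail_support_dsHexagon u))
  constructor
  · intro hF
    refine ⟨(hF _ _).1 (by decide), fun e he => ?_⟩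
    induction e using Sym2.ind with | _ x y => ?_
    have hx := hS ▸ he.2.2 x (Sym2.mem_mk_left x y)
    have hy := hS ▸ he.2.2 y (Sym2.mem_mk_right x y)
    obtain ⟨u, -, rfl⟩ := List.mem_map.1 hx
    obtain ⟨w, -, rfl⟩ := List.mem_map.1 hy
    rcases doubleSquareGraph_adj_iff.1 ((hF u w).2 he.1) with h | h
    · exact absurd ((hedge u w).2 h) he.2.1
    · rw [← Sym2.map_mk, h, Sym2.map_mk]
  · rintro ⟨hadj, honly⟩ u w
    rw [doubleSquareGraph_adj_iff, ← hedge, ← hinj.eq_iff, Sym2.map_mk, Sym2.map_mk,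
      ← mem_edgeSet]
    constructor
    · rintro (h | h)
      · exact c.edges_subset_edgeSet h
      · exact h ▸ hadj
    · intro h
      by_cases hmem : s(F u, F w) ∈ c.edges
      · exact Or.inl hmem
      · refine Or.inr (honly _ ⟨h, hmem, fun z hz => ?_⟩)
        rcases Sym2.mem_iff.1 hz with rfl | rfl <;> apply hsupp

theorem exists_isCycle_unique_chord_of_induced (f : Fin 3 ⊕ Fin 3 ↪ V)
    (hf : ∀ u w, doubleSquareGraph.Adj u w ↔ G.Adj (f u) (f w)) :
    ∃ c : G.Walk (f (inl 1)) (f (inl 1)), c.IsCycle ∧ c.length = 6 ∧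
      ∀ e, IsChord G c e → e = s(f (inl 1), f (inr 1)) := by
  let φ : doubleSquareGraph →g G := ⟨f, (hf _ _).1⟩
  refine ⟨dsHexagon.map φ, dsHexagon_isCycle.map f.injective, by simp [dsHexagon_length], ?_⟩
  exact ((induced_doubleSquare_iff_unique_chord f (Walk.edges_map _ _)
    (Walk.support_map _ _)).1 hf).2

theorem injective_of_nodup_map_tail_support_dsHexagon {F : Fin 3 ⊕ Fin 3 → V}
    (h : (dsHexagon.support.tail.map F).Nodup) : Function.Injective F := fun u w =>
  List.inj_on_of_nodup_map h (mem_tail_support_dsHexagon u) (mem_tail_support_dsHexagon w)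

theorem exists_induced_doubleSquare_of_append (hbip : G.Colorable 2) (hcb : ChordalBipartite G)
    {a b : V} {p : G.Walk a b} {q : G.Walk b a} (hc : (p.append q).IsCycle)
    (hab : IsChord G (p.append q) s(a, b))
    (honly : ∀ e, IsChord G (p.append q) e → e = s(a, b)) :
    ∃ F : Fin 3 ⊕ Fin 3 ↪ V, ∀ u w, doubleSquareGraph.Adj u w ↔ G.Adj (F u) (F w) := by
  have hq := length_eq_three_of_unique_chord hbip hcb hc hab honly
  have hp : p.reverse.length = 3 := by
    simp only [← Walk.isCycle_reverse (p := p.append q), ← isChord_reverse_iff (c := p.append q),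
      Walk.reverse_append] at hc hab honly
    exact length_eq_three_of_unique_chord hbip hcb hc hab honly
  rw [Walk.length_reverse] at hp
  obtain ⟨x₁, x₂, h₁, h₂, h₃, rfl⟩ := p.exists_eq_cons_cons_cons hp
  obtain ⟨y₁, y₂, h₄, h₅, h₆, rfl⟩ := q.exists_eq_cons_cons_cons hq
  -- Labelled so that `p.append q` is, definitionally, the image of `dsHexagon` under `F`.
  let F : Fin 3 ⊕ Fin 3 ↪ V :=
    ⟨Sum.elim ![x₂, a, y₁] ![x₁, b, y₂], injective_of_nodup_map_tail_support_dsHexagon hc.2⟩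
  exact ⟨F, (induced_doubleSquare_iff_unique_chord F rfl rfl).2 ⟨hab.1, honly⟩⟩

theorem exists_induced_doubleSquare_of_unique_chord (hbip : G.Colorable 2)
    (hcb : ChordalBipartite G) {v : V} {c : G.Walk v v} (hc : c.IsCycle) {e : Sym2 V}
    (he : IsChord G c e) (honly : ∀ e', IsChord G c e' → e' = e) :
    ∃ F : Fin 3 ⊕ Fin 3 ↪ V, ∀ u w, doubleSquareGraph.Adj u w ↔ G.Adj (F u) (F w) := by
  induction e using Sym2.ind with | _ a b => ?_
  have ha : a ∈ c.support := he.2.2 a (Sym2.mem_mk_left a b)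
  have hb : b ∈ (c.rotate a ha).support :=
    (c.mem_support_rotate_iff a ha).2 (he.2.2 b (Sym2.mem_mk_right a b))
  have hc' := hc.rotate ha
  rw [← isChord_rotate_iff ha] at he
  simp only [← isChord_rotate_iff ha] at honly
  rw [← (c.rotate a ha).take_spec hb] at hc' he honly
  exact exists_induced_doubleSquare_of_append hbip hcb hc' he honly

end InducedDoubleSquare

/-- a bipartite graph is doubly chordal bipartite iff it is chordal
bipartite and has no induced subgraph isomorphic to the double-square graph. -/
theorem doublyChordalBipartite_iff (V : Type*) (G : SimpleGraph V) (hbip : G.Colorable 2) :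
    DoublyChordalBipartite G ↔
      ChordalBipartite G ∧
        ¬ ∃ f : (Fin 3 ⊕ Fin 3) ↪ V,
            ∀ a b : Fin 3 ⊕ Fin 3, doubleSquareGraph.Adj a b ↔ G.Adj (f a) (f b) := by
  constructor
  · intro hdcb
    refine ⟨fun v c hc h6 => ?_, fun ⟨f, hf⟩ => ?_⟩
    · obtain ⟨e, -, -, he, -⟩ := hdcb v c hc h6
      exact ⟨e, he⟩
    · obtain ⟨c, hc, hlen, honly⟩ := exists_isCycle_unique_chord_of_induced f hf
      obtain ⟨e₁, e₂, hne, he₁, he₂⟩ := hdcb _ c hc hlen.ge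
      exact hne ((honly e₁ he₁).trans (honly e₂ he₂).symm)
  · rintro ⟨hcb, hds⟩ v c hc h6
    by_contra! hno
    obtain ⟨e, he⟩ := hcb v c hc h6
    refine hds (exists_induced_doubleSquare_of_unique_chord hbip hcb hc he fun e' he' => ?_)
    by_contra hne
    exact hno e' e hne he' he
end
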